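/- arXiv:2307.08824 — 7 statements merged into one kernel-verified Lean document; each statement's English description precedes it below -/
import Mathlib

section
/- If G is a bilaterally-complete tripartite graph, then the minimum cardinality of a 𝒯-transversal of G equals the maximum cardinality of a packing of triangles in G, i.e. τ△(G) = ν△(G). -/
/-!
Say `A` is complete to `B` and to `C`, let `k = |A|` and let `H` be the bipartite graph of edges
between `B` and `C`, so that every triangle is `abc` with `a ∈ A` and `bc ∈ H`. For `X ⊆ B` and
`Y ⊆ C`, the edges from `A` to `X ∪ Y` together with the edges of `H` missing `X ∪ Y` meet every
triangle, so `τ ≤ k|X| + k|Y| + |H - (X ∪ Y)|`. Conversely, a submodularity argument gives a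
subgraph of `H` of maximum degree at most `k` whose number of edges is at least the least of these
bounds, and König's edge-colouring theorem colours it by the vertices of `A`: the edges `bc` of
colour `a` give edge-disjoint triangles `abc`. Hence `ν ≥ τ`, while `ν ≤ τ` holds in every graph.
-/

open SimpleGraph

variable {V : Type*}

/-- The set of edges of a triangle, given by its vertex set `t`:
all unordered pairs of distinct vertices of `t`. -/
def triangleEdges (t : Finset V) : Set (Sym2 V) :=
  {e | ∃ u ∈ t, ∃ v ∈ t, u ≠ v ∧ e = s(u, v)}

/-- `E'` is a `𝒯`-transversal of `G`: a set of edges of `G` meeting every triangle of `G`. -/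
def IsTriTransversal (G : SimpleGraph V) (E' : Set (Sym2 V)) : Prop :=
  E' ⊆ G.edgeSet ∧ ∀ t : Finset V, G.IsNClique 3 t → ∃ e ∈ triangleEdges t, e ∈ E'

/-- `τ△ G`: the minimum cardinality of a `𝒯`-transversal of `G`. -/
noncomputable def triTransversalNum (G : SimpleGraph V) : ℕ :=
  sInf {n | ∃ E' : Set (Sym2 V), IsTriTransversal G E' ∧ E'.ncard = n}

/-- `P` is a packing in `G`: a set of triangles of `G` that are pairwise edge-disjoint. -/
def IsTriPacking (G : SimpleGraph V) (P : Set (Finset V)) : Prop :=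
  (∀ t ∈ P, G.IsNClique 3 t) ∧
    P.Pairwise fun t t' => Disjoint (triangleEdges t) (triangleEdges t')

/-- `ν△ G`: the maximum cardinality of a packing of triangles in `G`. -/
noncomputable def triPackingNum (G : SimpleGraph V) : ℕ :=
  sSup {n | ∃ P : Set (Finset V), IsTriPacking G P ∧ P.ncard = n}

/-- The set of edges of `G` with one endpoint in `M` and the other in `W`. -/
def edgesBetween (G : SimpleGraph V) (M W : Set V) : Set (Sym2 V) :=
  {e | e ∈ G.edgeSet ∧ ∃ u ∈ M, ∃ w ∈ W, e = s(u, w)}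

/-- `G` is tripartite with parts `A`, `B`, `C`: the vertex set is partitioned into
the three independent sets `A`, `B`, `C`. -/
def IsTripartition (G : SimpleGraph V) (A B C : Set V) : Prop :=
  A ∪ B ∪ C = Set.univ ∧ Disjoint A B ∧ Disjoint A C ∧ Disjoint B C ∧
    (∀ u ∈ A, ∀ v ∈ A, ¬G.Adj u v) ∧ (∀ u ∈ B, ∀ v ∈ B, ¬G.Adj u v) ∧
    (∀ u ∈ C, ∀ v ∈ C, ¬G.Adj u v)

/-- The side `G[X ∪ Y]` of a tripartite graph is a complete bipartite graph. -/
def CompleteSide (G : SimpleGraph V) (X Y : Set V) : Prop :=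
  ∀ x ∈ X, ∀ y ∈ Y, G.Adj x y

/-- `W` is a vertex cover of the subgraph edge-induced by the edge set `Y`. -/
def CoversEdges (W : Set V) (Y : Set (Sym2 V)) : Prop :=
  ∀ e ∈ Y, ∃ v ∈ W, v ∈ e

/-- `M` is a matching consisting of edges from the edge set `F`:
the edges of `M` are pairwise vertex-disjoint. -/
def IsMatchingIn (F : Set (Sym2 V)) (M : Set (Sym2 V)) : Prop :=
  M ⊆ F ∧ M.Pairwise fun e f => ∀ v, v ∈ e → v ∉ f

open Finset

section BipartiteDegrees

variable {β γ : Type*} [DecidableEq β] [DecidableEq γ]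

def degFst (E : Finset (β × γ)) (b : β) : ℕ := #{e ∈ E | e.1 = b}

def degSnd (E : Finset (β × γ)) (c : γ) : ℕ := #{e ∈ E | e.2 = c}

def MaxDegreeLE (E : Finset (β × γ)) (k : ℕ) : Prop :=
  (∀ b, degFst E b ≤ k) ∧ ∀ c, degSnd E c ≤ k

lemma MaxDegreeLE.mono {E F : Finset (β × γ)} {k : ℕ} (hF : MaxDegreeLE F k) (hEF : E ⊆ F) :
    MaxDegreeLE E k :=
  ⟨fun b => (card_le_card (filter_subset_filter _ hEF)).trans (hF.1 b),
    fun c => (card_le_card (filter_subset_filter _ hEF)).trans (hF.2 c)⟩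

lemma degFst_insert {E : Finset (β × γ)} {e : β × γ} (he : e ∉ E) :
    degFst (insert e E) e.1 = degFst E e.1 + 1 := by
  unfold degFst
  rw [filter_insert, if_pos rfl, card_insert_of_notMem (fun h => he (mem_filter.mp h).1)]

lemma degSnd_insert {E : Finset (β × γ)} {e : β × γ} (he : e ∉ E) :
    degSnd (insert e E) e.2 = degSnd E e.2 + 1 := by
  unfold degSnd
  rw [filter_insert, if_pos rfl, card_insert_of_notMem (fun h => he (mem_filter.mp h).1)]

end BipartiteDegrees

section CoverCost

variable {β γ : Type*} [DecidableEq β] [DecidableEq γ]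

/-- The capacity of the cut `(X, Y)` in the flow network of subgraphs of `E` of maximum degree
`k`; its minimum is the largest size of such a subgraph. -/
def coverCost (k : ℕ) (E : Finset (β × γ)) (X : Finset β) (Y : Finset γ) : ℕ :=
  k * #X + k * #Y + #{e ∈ E | e.1 ∉ X ∧ e.2 ∉ Y}

noncomputable def minCoverCost (k : ℕ) (E : Finset (β × γ)) : ℕ :=
  sInf (Set.range fun XY : Finset β × Finset γ => coverCost k E XY.1 XY.2)

variable {k : ℕ} {E : Finset (β × γ)}

lemma minCoverCost_le (X : Finset β) (Y : Finset γ) : minCoverCost k E ≤ coverCost k E X Y :=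
  Nat.sInf_le ⟨(X, Y), rfl⟩

lemma exists_coverCost_eq_minCoverCost (k : ℕ) (E : Finset (β × γ)) :
    ∃ X Y, coverCost k E X Y = minCoverCost k E := by
  obtain ⟨⟨X, Y⟩, h⟩ := Nat.sInf_mem (Set.range_nonempty fun XY : Finset β × Finset γ =>
    coverCost k E XY.1 XY.2)
  exact ⟨X, Y, h⟩

lemma coverCost_union_inter_add_le (X X' : Finset β) (Y Y' : Finset γ) :
    coverCost k E (X ∪ X') (Y ∩ Y') + coverCost k E (X ∩ X') (Y ∪ Y') ≤
      coverCost k E X Y + coverCost k E X' Y' := by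
  have hX := card_union_add_card_inter X X'
  have hY := card_union_add_card_inter Y Y'
  have hE : #{e ∈ E | e.1 ∉ X ∪ X' ∧ e.2 ∉ Y ∩ Y'} + #{e ∈ E | e.1 ∉ X ∩ X' ∧ e.2 ∉ Y ∪ Y'} ≤
      #{e ∈ E | e.1 ∉ X ∧ e.2 ∉ Y} + #{e ∈ E | e.1 ∉ X' ∧ e.2 ∉ Y'} := by
    simp only [card_filter, ← sum_add_distrib]
    refine sum_le_sum fun e _ => ?_
    by_cases e.1 ∈ X <;> by_cases e.1 ∈ X' <;> by_cases e.2 ∈ Y <;> by_cases e.2 ∈ Y' <;>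
      simp [*]
  unfold coverCost
  nlinarith

lemma coverCost_union_inter_eq {X X' : Finset β} {Y Y' : Finset γ}
    (h : coverCost k E X Y = minCoverCost k E) (h' : coverCost k E X' Y' = minCoverCost k E) :
    coverCost k E (X ∪ X') (Y ∩ Y') = minCoverCost k E := by
  have := coverCost_union_inter_add_le (k := k) (E := E) X X' Y Y'
  have := minCoverCost_le (k := k) (E := E) (X ∪ X') (Y ∩ Y')
  have := minCoverCost_le (k := k) (E := E) (X ∩ X') (Y ∪ Y')
  omega

lemma coverCost_erase_of_covered {e : β × γ} {X : Finset β} {Y : Finset γ}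
    (he : e.1 ∈ X ∨ e.2 ∈ Y) : coverCost k (E.erase e) X Y = coverCost k E X Y := by
  unfold coverCost
  rw [filter_erase, erase_eq_of_notMem (by simp; tauto)]

lemma coverCost_le_coverCost_erase_add_one (e : β × γ) (X : Finset β) (Y : Finset γ) :
    coverCost k E X Y ≤ coverCost k (E.erase e) X Y + 1 := by
  unfold coverCost
  rw [filter_erase]
  have := pred_card_le_card_erase (a := e) (s := {e ∈ E | e.1 ∉ X ∧ e.2 ∉ Y})
  omega

lemma coverCost_insert_add_degFst {b : β} {X : Finset β} {Y : Finset γ} (hb : b ∉ X)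
    (hY : ∀ e ∈ E, e.1 = b → e.2 ∉ Y) :
    coverCost k E (insert b X) Y + degFst E b = coverCost k E X Y + k := by
  have hsplit : {e ∈ E | e.1 ∉ X ∧ e.2 ∉ Y} =
      {e ∈ E | e.1 ∉ insert b X ∧ e.2 ∉ Y} ∪ {e ∈ E | e.1 = b} := by
    ext e
    simp only [mem_union, mem_filter, mem_insert]
    constructor
    · tauto
    · rintro (⟨he, h1, h2⟩ | ⟨he, rfl⟩)
      · tauto
      · exact ⟨he, hb, hY e he rfl⟩
  have hdisj : Disjoint {e ∈ E | e.1 ∉ insert b X ∧ e.2 ∉ Y} {e ∈ E | e.1 = b} := by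
    rw [disjoint_filter]
    intro e _ h
    simp_all
  unfold coverCost degFst
  rw [hsplit, card_union_of_disjoint hdisj, card_insert_of_notMem hb]
  ring

lemma exists_uncovered_of_minCoverCost_erase_lt {e : β × γ}
    (h : minCoverCost k (E.erase e) < minCoverCost k E) :
    ∃ X Y, coverCost k E X Y = minCoverCost k E ∧ e.1 ∉ X ∧ e.2 ∉ Y := by
  obtain ⟨X, Y, hXY⟩ := exists_coverCost_eq_minCoverCost k (E.erase e)
  have hmin := minCoverCost_le (k := k) (E := E) X Y
  by_cases hcov : e.1 ∈ X ∨ e.2 ∈ Y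
  · rw [← coverCost_erase_of_covered hcov] at hmin
    omega
  · rw [not_or] at hcov
    have := coverCost_le_coverCost_erase_add_one (k := k) (E := E) e X Y
    exact ⟨X, Y, by omega, hcov⟩

lemma exists_minCoverCost_le_erase_of_lt_degFst {b : β} (hb : k < degFst E b) :
    ∃ e ∈ E, minCoverCost k E ≤ minCoverCost k (E.erase e) := by
  by_contra! hlt
  obtain ⟨e₀, he₀⟩ : ({e ∈ E | e.1 = b} : Finset _).Nonempty :=
    card_pos.mp (by unfold degFst at hb; omega)
  rw [mem_filter] at he₀
  have hex : ∃ n, ∃ X Y, coverCost k E X Y = minCoverCost k E ∧ b ∉ X ∧ #Y = n := by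
    obtain ⟨X, Y, hXY, hX, -⟩ := exists_uncovered_of_minCoverCost_erase_lt (hlt e₀ he₀.1)
    exact ⟨_, X, Y, hXY, he₀.2 ▸ hX, rfl⟩
  classical
  obtain ⟨X, Y, hXY, hbX, hY⟩ := Nat.find_spec hex
  -- a minimizer with `b ∉ X` and `Y` of least size leaves every edge at `b` uncovered
  have huncov : ∀ e ∈ E, e.1 = b → e.2 ∉ Y := by
    intro e he heb
    obtain ⟨X', Y', hXY', hX', hY'⟩ := exists_uncovered_of_minCoverCost_erase_lt (hlt e he)
    have hle := Nat.find_min' hex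
      ⟨X ∪ X', Y ∩ Y', coverCost_union_inter_eq hXY hXY', by simp [hbX, heb ▸ hX'], rfl⟩
    have hinter : Y ∩ Y' = Y := eq_of_subset_of_card_le inter_subset_left (hY ▸ hle)
    rw [← hinter]
    simp [hY']
  -- so putting `b` into `X` lowers the cost by `degFst E b - k > 0`
  have := coverCost_insert_add_degFst hbX huncov (k := k)
  have := minCoverCost_le (k := k) (E := E) (insert b X) Y
  omega

lemma coverCost_map_prodComm (X : Finset β) (Y : Finset γ) :
    coverCost k (E.map (Equiv.prodComm β γ).toEmbedding) Y X = coverCost k E X Y := by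
  unfold coverCost
  rw [filter_map, card_map, add_comm (k * #Y)]
  simp only [Function.comp_def, Equiv.coe_toEmbedding, Equiv.prodComm_apply, Prod.fst_swap,
    Prod.snd_swap, and_comm]

lemma minCoverCost_map_prodComm :
    minCoverCost k (E.map (Equiv.prodComm β γ).toEmbedding) = minCoverCost k E := by
  apply le_antisymm
  · obtain ⟨X, Y, h⟩ := exists_coverCost_eq_minCoverCost k E
    rw [← h, ← coverCost_map_prodComm]
    exact minCoverCost_le _ _
  · obtain ⟨Y, X, h⟩ := exists_coverCost_eq_minCoverCost k (E.map (Equiv.prodComm β γ).toEmbedding)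
    rw [← h, coverCost_map_prodComm]
    exact minCoverCost_le _ _

omit [DecidableEq β] in
lemma degFst_map_prodComm (c : γ) :
    degFst (E.map (Equiv.prodComm β γ).toEmbedding) c = degSnd E c := by
  unfold degFst degSnd
  rw [filter_map, card_map]
  rfl

lemma exists_minCoverCost_le_erase_of_lt_degSnd {c : γ} (hc : k < degSnd E c) :
    ∃ e ∈ E, minCoverCost k E ≤ minCoverCost k (E.erase e) := by
  rw [← degFst_map_prodComm] at hc
  obtain ⟨f, hf, hle⟩ := exists_minCoverCost_le_erase_of_lt_degFst hc
  obtain ⟨e, he, rfl⟩ := mem_map.mp hf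
  refine ⟨e, he, ?_⟩
  rwa [← map_erase, minCoverCost_map_prodComm, minCoverCost_map_prodComm] at hle

/-- Edges at vertices of degree `> k` are deleted one at a time without lowering `minCoverCost`. -/
theorem exists_subset_maxDegreeLE_minCoverCost_le (k : ℕ) (E : Finset (β × γ)) :
    ∃ U ⊆ E, MaxDegreeLE U k ∧ minCoverCost k E ≤ #U := by
  induction E using Finset.strongInduction with
  | H E ih =>
    by_cases hE : MaxDegreeLE E k
    · refine ⟨E, Subset.rfl, hE, ?_⟩
      simpa [coverCost] using minCoverCost_le (k := k) (E := E) ∅ ∅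
    obtain ⟨e, he, hle⟩ : ∃ e ∈ E, minCoverCost k E ≤ minCoverCost k (E.erase e) := by
      simp only [MaxDegreeLE, not_and_or, not_forall, not_le] at hE
      obtain ⟨b, hb⟩ | ⟨c, hc⟩ := hE
      · exact exists_minCoverCost_le_erase_of_lt_degFst hb
      · exact exists_minCoverCost_le_erase_of_lt_degSnd hc
    obtain ⟨U, hU, hUdeg, hUcard⟩ := ih _ (erase_ssubset he)
    exact ⟨U, hU.trans (erase_subset e E), hUdeg, hle.trans hUcard⟩

end CoverCost

section EdgeColoring

variable {β γ κ : Type*} [DecidableEq β] [DecidableEq γ]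

def IsProperEdgeColoring (E : Finset (β × γ)) (col : β × γ → κ) : Prop :=
  ∀ e ∈ E, ∀ f ∈ E, e ≠ f → e.1 = f.1 ∨ e.2 = f.2 → col e ≠ col f

namespace IsProperEdgeColoring

variable {D E : Finset (β × γ)} {col : β × γ → κ} {e f : β × γ}

omit [DecidableEq β] [DecidableEq γ] in
lemma mono (h : IsProperEdgeColoring E col) (hDE : D ⊆ E) : IsProperEdgeColoring D col :=
  fun e he f hf => h e (hDE he) f (hDE hf)

omit [DecidableEq β] [DecidableEq γ] in
lemma eq_of_fst_eq (h : IsProperEdgeColoring E col) (he : e ∈ E) (hf : f ∈ E) (hef : e.1 = f.1)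
    (hcol : col e = col f) : e = f :=
  by_contra fun hne => h e he f hf hne (Or.inl hef) hcol

omit [DecidableEq β] [DecidableEq γ] in
lemma eq_of_snd_eq (h : IsProperEdgeColoring E col) (he : e ∈ E) (hf : f ∈ E) (hef : e.2 = f.2)
    (hcol : col e = col f) : e = f :=
  by_contra fun hne => h e he f hf hne (Or.inr hef) hcol

lemma insert_update [DecidableEq κ] (h : IsProperEdgeColoring E col) (he : e ∉ E) {a : κ}
    (ha : ∀ f ∈ E, e.1 = f.1 ∨ e.2 = f.2 → col f ≠ a) :
    IsProperEdgeColoring (insert e E) (Function.update col e a) := by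
  have hne : ∀ f ∈ E, f ≠ e := fun f hf hfe => he (hfe ▸ hf)
  intro f hf g hg hfg hadj
  rw [mem_insert] at hf hg
  rcases hf with rfl | hf <;> rcases hg with rfl | hg
  · exact absurd rfl hfg
  · rw [Function.update_self, Function.update_of_ne (hne g hg)]
    exact (ha g hg hadj).symm
  · rw [Function.update_self, Function.update_of_ne (hne f hf)]
    exact ha f hf (hadj.imp Eq.symm Eq.symm)
  · rw [Function.update_of_ne (hne f hf), Function.update_of_ne (hne g hg)]
    exact h f hf g hg hfg hadj

omit [DecidableEq β] [DecidableEq γ] in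
lemma recolor [DecidableEq κ] (hcol : IsProperEdgeColoring E col) {a d : κ} (had : a ≠ d)
    {colD : β × γ → Bool} (hcolD : IsProperEdgeColoring {e ∈ E | col e = a ∨ col e = d} colD) :
    IsProperEdgeColoring E fun e =>
      if col e = a ∨ col e = d then (if colD e then a else d) else col e := by
  intro e he f hf hef hadj
  by_cases hDe : col e = a ∨ col e = d <;> by_cases hDf : col f = a ∨ col f = d <;>
    simp only [hDe, hDf, if_true, if_false]
  · have := hcolD e (mem_filter.mpr ⟨he, hDe⟩) f (mem_filter.mpr ⟨hf, hDf⟩) hef hadj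
    cases h₁ : colD e <;> cases h₂ : colD f <;> simp_all [Ne.symm had]
  · split_ifs <;> grind
  · split_ifs <;> grind
  · exact hcol e he f hf hef hadj

end IsProperEdgeColoring

/-- The colours are swapped along the alternating path starting at `c`, two edges at a time. -/
lemma exists_kempe_recoloring (D : Finset (β × γ)) (col : β × γ → Bool)
    (hcol : IsProperEdgeColoring D col) (b : β) (c : γ)
    (hb : ∀ e ∈ D, e.1 = b → col e = false) (hc : ∀ e ∈ D, e.2 = c → col e = true) :
    ∃ col' : β × γ → Bool, IsProperEdgeColoring D col' ∧
      (∀ e ∈ D, e.1 = b → col' e = false) ∧ ∀ e ∈ D, e.2 = c → col' e = false := by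
  induction D using Finset.strongInduction generalizing col c with
  | H D ih =>
  by_cases hc₀ : ∃ e₀ ∈ D, e₀.2 = c
  swap
  · push Not at hc₀
    exact ⟨col, hcol, hb, fun e he hec => absurd hec (hc₀ e he)⟩
  -- the path starts with the unique edge `e₀` at `c`, coloured `true`
  obtain ⟨e₀, he₀, he₀c⟩ := hc₀
  have hcol₀ : col e₀ = true := hc e₀ he₀ he₀c
  have hat_c : ∀ f ∈ D, f.2 = c → f = e₀ := fun f hf hfc =>
    hcol.eq_of_snd_eq hf he₀ (hfc.trans he₀c.symm) (by rw [hc f hf hfc, hcol₀])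
  have hat_b₀ : ∀ f ∈ D, f.1 = e₀.1 → col f = true → f = e₀ := fun f hf hfb hf' =>
    hcol.eq_of_fst_eq hf he₀ hfb (by rw [hf', hcol₀])
  have hne_b : ∀ e ∈ D, e.1 = b → e ≠ e₀ := by
    rintro e he heb rfl
    simp [hb e he heb] at hcol₀
  by_cases he₁ : ∃ e₁ ∈ D, e₁.1 = e₀.1 ∧ col e₁ = false
  swap
  · push Not at he₁
    refine ⟨Function.update col e₀ false, ?_, fun e he heb => ?_, fun e he hec => ?_⟩
    · rw [← insert_erase he₀]
      refine (hcol.mono (erase_subset _ _)).insert_update (notMem_erase _ _) fun f hf hadj => ?_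
      rcases hadj with h | h
      · exact he₁ f (mem_of_mem_erase hf) h.symm
      · exact absurd (hat_c f (mem_of_mem_erase hf) (h.symm.trans he₀c)) (ne_of_mem_erase hf)
    · rw [Function.update_of_ne (hne_b e he heb)]
      exact hb e he heb
    · rw [hat_c e he hec, Function.update_self]
  -- the path continues with the unique edge `e₁ ≠ e₀` at `e₀.1`, coloured `false`
  obtain ⟨e₁, he₁, he₁b, hcol₁⟩ := he₁
  have he₁₀ : e₁ ≠ e₀ := by rintro rfl; simp [hcol₀] at hcol₁
  set D' := (D.erase e₀).erase e₁
  have hD'D : D' ⊆ D := (erase_subset _ _).trans (erase_subset _ _)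
  have hD'_b₀ : ∀ f ∈ D', f.1 ≠ e₀.1 := by
    intro f hf hfb
    cases hf' : col f
    · exact ne_of_mem_erase hf
        (hcol.eq_of_fst_eq (hD'D hf) he₁ (hfb.trans he₁b.symm) (by rw [hf', hcol₁]))
    · exact ne_of_mem_erase (mem_of_mem_erase hf) (hat_b₀ f (hD'D hf) hfb hf')
  -- and `e₁.2` misses `false` in `D'`, so the rest of the path is recoloured by induction
  obtain ⟨col', hcol', hb', hc'⟩ := ih D'
    ((erase_subset _ _).trans_ssubset (erase_ssubset he₀)) col (hcol.mono hD'D) e₁.2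
    (fun e he heb => hb e (hD'D he) heb) fun f hf hfc => by
      by_contra hf'
      exact ne_of_mem_erase hf (hcol.eq_of_snd_eq (hD'D hf) he₁ hfc (by simpa [hcol₁] using hf'))
  refine ⟨Function.update (Function.update col' e₁ true) e₀ false, ?_, fun e he heb => ?_,
    fun e he hec => ?_⟩
  · rw [← insert_erase he₀, ← insert_erase (mem_erase.mpr ⟨he₁₀, he₁⟩)]
    refine (hcol'.insert_update (notMem_erase _ _) fun f hf hadj => ?_).insert_update
      (by simp [he₁₀.symm, D']) fun f hf hadj => ?_
    · rcases hadj with h | h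
      · exact absurd (he₁b ▸ h).symm (hD'_b₀ f hf)
      · simp [hc' f hf h.symm]
    · rcases mem_insert.mp hf with rfl | hf
      · simp
      rcases hadj with h | h
      · exact absurd h.symm (hD'_b₀ f hf)
      · exact absurd (hat_c f (hD'D hf) (h.symm.trans he₀c)) (ne_of_mem_erase (mem_of_mem_erase hf))
  · have he' : e ∈ D' := by
      refine mem_erase.mpr ⟨fun h => ?_, mem_erase.mpr ⟨hne_b e he heb, he⟩⟩
      exact hne_b e₀ he₀ (he₁b ▸ h ▸ heb) rfl
    rw [Function.update_of_ne (hne_b e he heb), Function.update_of_ne (ne_of_mem_erase he')]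
    exact hb' e he' heb
  · rw [hat_c e he hec, Function.update_self]

omit [DecidableEq γ] in
lemma exists_color_ne_of_degFst_lt [Fintype κ] (E : Finset (β × γ)) (col : β × γ → κ) {b : β}
    (hb : degFst E b < Fintype.card κ) : ∃ a, ∀ f ∈ E, f.1 = b → col f ≠ a := by
  classical
  obtain ⟨a, -, ha⟩ := exists_mem_notMem_of_card_lt_card
    ((card_image_le (f := col) (s := {f ∈ E | f.1 = b})).trans_lt (card_univ (α := κ) ▸ hb))
  exact ⟨a, fun f hf hfb hfa => ha (mem_image.mpr ⟨f, mem_filter.mpr ⟨hf, hfb⟩, hfa⟩)⟩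

omit [DecidableEq β] in
lemma exists_color_ne_of_degSnd_lt [Fintype κ] (E : Finset (β × γ)) (col : β × γ → κ) {c : γ}
    (hc : degSnd E c < Fintype.card κ) : ∃ d, ∀ f ∈ E, f.2 = c → col f ≠ d := by
  classical
  obtain ⟨d, -, hd⟩ := exists_mem_notMem_of_card_lt_card
    ((card_image_le (f := col) (s := {f ∈ E | f.2 = c})).trans_lt (card_univ (α := κ) ▸ hc))
  exact ⟨d, fun f hf hfc hfd => hd (mem_image.mpr ⟨f, mem_filter.mpr ⟨hf, hfc⟩, hfd⟩)⟩

/-- König's edge-colouring theorem. -/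
theorem exists_isProperEdgeColoring [Fintype κ] [Nonempty κ] (E : Finset (β × γ))
    (hE : MaxDegreeLE E (Fintype.card κ)) : ∃ col : β × γ → κ, IsProperEdgeColoring E col := by
  classical
  induction E using Finset.induction_on with
  | empty => exact ⟨fun _ => Classical.arbitrary κ, fun e he => absurd he (notMem_empty e)⟩
  | insert e E heE ih =>
  obtain ⟨col, hcol⟩ := ih (hE.mono (subset_insert e E))
  obtain ⟨a, ha⟩ := exists_color_ne_of_degFst_lt E col (b := e.1)
    (by have := hE.1 e.1; rw [degFst_insert heE] at this; omega)
  by_cases hac : ∀ f ∈ E, f.2 = e.2 → col f ≠ a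
  · exact ⟨Function.update col e a, hcol.insert_update heE fun f hf hadj =>
      hadj.elim (fun h => ha f hf h.symm) (fun h => hac f hf h.symm)⟩
  obtain ⟨d, hd⟩ := exists_color_ne_of_degSnd_lt E col (c := e.2)
    (by have := hE.2 e.2; rw [degSnd_insert heE] at this; omega)
  have had : a ≠ d := by rintro rfl; exact hac hd
  -- swap `a` and `d` on the Kempe chain at `e.2`, after which `a` is free at both ends of `e`
  set D := {f ∈ E | col f = a ∨ col f = d}
  have hD : ∀ {f}, f ∈ D ↔ f ∈ E ∧ (col f = a ∨ col f = d) := mem_filter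
  obtain ⟨colD, hcolD, hbD, hcD⟩ := exists_kempe_recoloring D (fun f => decide (col f = a))
    (fun f hf g hg hfg hadj => by
      have := hcol f (hD.1 hf).1 g (hD.1 hg).1 hfg hadj
      have := (hD.1 hf).2
      have := (hD.1 hg).2
      grind)
    e.1 e.2 (fun f hf hfb => by simpa using ha f (hD.1 hf).1 hfb)
    (fun f hf hfc => by
      have := hd f (hD.1 hf).1 hfc
      have := (hD.1 hf).2
      grind)
  set col' := fun f => if col f = a ∨ col f = d then (if colD f then a else d) else col f
  refine ⟨Function.update col' e a, (hcol.recolor had hcolD).insert_update heE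
    fun f hf hadj => ?_⟩
  by_cases hfD : col f = a ∨ col f = d
  · have : colD f = false := hadj.elim (fun h => hbD f (hD.2 ⟨hf, hfD⟩) h.symm)
      (fun h => hcD f (hD.2 ⟨hf, hfD⟩) h.symm)
    simp [hfD, this, Ne.symm had]
  · simp only [hfD, if_false]
    exact fun h => hfD (Or.inl h)

end EdgeColoring

section TriangleCounts

variable {G : SimpleGraph V}

lemma disjoint_triangleEdges_of_card_inter_le_one [DecidableEq V] {t t' : Finset V}
    (h : #(t ∩ t') ≤ 1) : Disjoint (triangleEdges t) (triangleEdges t') := by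
  rw [Set.disjoint_left]
  rintro e ⟨u, hu, v, hv, huv, rfl⟩ ⟨u', hu', v', hv', -, he⟩
  have hmem : ∀ w ∈ s(u, v), w ∈ t' := by
    rw [he]
    intro w hw
    rcases Sym2.mem_iff.mp hw with rfl | rfl <;> assumption
  exact huv (card_le_one.mp h u (mem_inter.mpr ⟨hu, hmem u (Sym2.mem_mk_left u v)⟩)
    v (mem_inter.mpr ⟨hv, hmem v (Sym2.mem_mk_right u v)⟩))

lemma isTriTransversal_edgeSet (G : SimpleGraph V) : IsTriTransversal G G.edgeSet := by
  refine ⟨subset_rfl, fun t ht => ?_⟩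
  obtain ⟨u, hu, v, hv, huv⟩ := one_lt_card.mp (by rw [ht.card_eq]; norm_num)
  exact ⟨s(u, v), ⟨u, hu, v, hv, huv, rfl⟩, ht.isClique hu hv huv⟩

/-- Every triangle of a packing owns a private edge of the transversal. -/
lemma ncard_le_ncard_of_isTriPacking {P : Set (Finset V)} {E' : Set (Sym2 V)}
    (hP : IsTriPacking G P) (hE' : IsTriTransversal G E') (hfin : E'.Finite) :
    P.ncard ≤ E'.ncard := by
  classical
  have hex : ∀ t ∈ P, ∃ e ∈ triangleEdges t, e ∈ E' := fun t ht => hE'.2 t (hP.1 t ht)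
  rcases P.eq_empty_or_nonempty with rfl | ⟨t₀, ht₀⟩
  · simp
  have : Nonempty (Sym2 V) := ⟨(hex t₀ ht₀).choose⟩
  choose! f hf hfE' using hex
  refine Set.ncard_le_ncard_of_injOn f hfE' (fun t ht t' ht' htt' => ?_) hfin
  by_contra hne
  exact Set.disjoint_left.mp (hP.2 ht ht' hne) (hf t ht) (htt' ▸ hf t' ht')

lemma triTransversalNum_le {E' : Set (Sym2 V)} (hE' : IsTriTransversal G E') :
    triTransversalNum G ≤ E'.ncard :=
  Nat.sInf_le ⟨E', hE', rfl⟩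

lemma le_triPackingNum [Finite V] {P : Set (Finset V)} (hP : IsTriPacking G P) :
    P.ncard ≤ triPackingNum G :=
  le_csSup ⟨G.edgeSet.ncard, fun _ ⟨_, hP', hn⟩ =>
    hn ▸ ncard_le_ncard_of_isTriPacking hP' (isTriTransversal_edgeSet G) (Set.toFinite _)⟩
    ⟨P, hP, rfl⟩

lemma triPackingNum_le_triTransversalNum [Finite V] (G : SimpleGraph V) :
    triPackingNum G ≤ triTransversalNum G := by
  obtain ⟨E', hE', hcard⟩ : triTransversalNum G ∈
      {n | ∃ E' : Set (Sym2 V), IsTriTransversal G E' ∧ E'.ncard = n} :=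
    Nat.sInf_mem ⟨_, G.edgeSet, isTriTransversal_edgeSet G, rfl⟩
  refine csSup_le ⟨0, ∅, ⟨by simp, Set.pairwise_empty _⟩, Set.ncard_empty _⟩ ?_
  rintro _ ⟨P, hP, rfl⟩
  exact (ncard_le_ncard_of_isTriPacking hP hE' (Set.toFinite _)).trans_eq hcard

end TriangleCounts

section Tripartite

variable {G : SimpleGraph V} {A B C : Set V}

lemma CompleteSide.symm {X Y : Set V} (h : CompleteSide G X Y) : CompleteSide G Y X :=
  fun y hy x hx => (h x hx y hy).symm

lemma IsTripartition.swap_left (h : IsTripartition G A B C) : IsTripartition G B A C := by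
  obtain ⟨hcov, hAB, hAC, hBC, hA, hB, hC⟩ := h
  exact ⟨by rwa [Set.union_comm B], hAB.symm, hBC, hAC, hB, hA, hC⟩

lemma IsTripartition.swap_right (h : IsTripartition G A B C) : IsTripartition G A C B := by
  obtain ⟨hcov, hAB, hAC, hBC, hA, hB, hC⟩ := h
  exact ⟨by rwa [Set.union_right_comm], hAC, hAB, hBC.symm, hA, hC, hB⟩

lemma card_filter_mem_le_one_of_isClique {S : Set V} (hS : ∀ u ∈ S, ∀ v ∈ S, ¬G.Adj u v)
    {t : Finset V} (ht : G.IsClique t) [DecidablePred (· ∈ S)] : #{v ∈ t | v ∈ S} ≤ 1 := by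
  refine card_le_one.mpr fun u hu v hv => ?_
  rw [mem_filter] at hu hv
  by_contra huv
  exact hS u hu.2 v hv.2 (ht hu.1 hv.1 huv)

lemma IsTripartition.exists_mem_of_isNClique (h : IsTripartition G A B C) {t : Finset V}
    (ht : G.IsNClique 3 t) : ∃ a ∈ t, ∃ b ∈ t, ∃ c ∈ t, a ∈ A ∧ b ∈ B ∧ c ∈ C := by
  classical
  obtain ⟨hcov, -, -, -, hA, hB, hC⟩ := h
  have hsplit : t = {v ∈ t | v ∈ A} ∪ {v ∈ t | v ∈ B} ∪ {v ∈ t | v ∈ C} := by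
    ext v
    have hv : v ∈ A ∪ B ∪ C := hcov ▸ Set.mem_univ v
    simp only [Set.mem_union] at hv
    simp only [mem_union, mem_filter]
    tauto
  have hcard : #t ≤ #{v ∈ t | v ∈ A} + #{v ∈ t | v ∈ B} + #{v ∈ t | v ∈ C} := by
    conv_lhs => rw [hsplit]
    exact (card_union_le _ _).trans (Nat.add_le_add_right (card_union_le _ _) _)
  rw [ht.card_eq] at hcard
  have hA' := card_filter_mem_le_one_of_isClique hA ht.isClique
  have hB' := card_filter_mem_le_one_of_isClique hB ht.isClique
  have hC' := card_filter_mem_le_one_of_isClique hC ht.isClique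
  obtain ⟨a, ha⟩ := card_pos.mp (show 0 < #{v ∈ t | v ∈ A} by omega)
  obtain ⟨b, hb⟩ := card_pos.mp (show 0 < #{v ∈ t | v ∈ B} by omega)
  obtain ⟨c, hc⟩ := card_pos.mp (show 0 < #{v ∈ t | v ∈ C} by omega)
  rw [mem_filter] at ha hb hc
  exact ⟨a, ha.1, b, hb.1, c, hc.1, ha.2, hb.2, hc.2⟩

lemma card_inter_le_one_of_mem_parts [DecidableEq V] (hAB : Disjoint A B)
    (hAC : Disjoint A C) (hBC : Disjoint B C) {a a' b b' c c' : V} (ha : a ∈ A) (ha' : a' ∈ A)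
    (hb : b ∈ B) (hb' : b' ∈ B) (hc : c ∈ C) (hc' : c' ∈ C) (hab : a = a' → b ≠ b')
    (hac : a = a' → c ≠ c') (hbc : b = b' → c ≠ c') : #({a, b, c} ∩ {a', b', c'}) ≤ 1 := by
  have hAB' := hAB.notMem_of_mem_left
  have hAC' := hAC.notMem_of_mem_left
  have hBC' := hBC.notMem_of_mem_left
  refine card_le_one.mpr fun x hx y hy => ?_
  simp only [mem_inter, mem_insert, mem_singleton] at hx hy
  grind

open Classical in
noncomputable def crossEdges [Fintype V] (G : SimpleGraph V) (B C : Set V) : Finset (V × V) :=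
  {p | p.1 ∈ B ∧ p.2 ∈ C ∧ G.Adj p.1 p.2}

lemma mem_crossEdges [Fintype V] {p : V × V} :
    p ∈ crossEdges G B C ↔ p.1 ∈ B ∧ p.2 ∈ C ∧ G.Adj p.1 p.2 := by
  simp [crossEdges]

end Tripartite

section BilaterallyComplete

variable [Fintype V] {G : SimpleGraph V} {A B C : Set V}

open Classical in
noncomputable def coverTransversal [DecidableEq V] (G : SimpleGraph V) (A B C : Set V)
    (X Y : Finset V) : Finset (Sym2 V) :=
  ({p ∈ A.toFinset ×ˢ (X ∪ Y) | G.Adj p.1 p.2} ∪ {e ∈ crossEdges G B C | e.1 ∉ X ∧ e.2 ∉ Y}).image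
    fun p => s(p.1, p.2)

lemma isTriTransversal_coverTransversal [DecidableEq V] (h : IsTripartition G A B C)
    (X Y : Finset V) : IsTriTransversal G (coverTransversal G A B C X Y) := by
  classical
  have hmem : ∀ {u v : V}, (u ∈ A ∧ v ∈ X ∪ Y ∨ (u, v) ∈ crossEdges G B C ∧ u ∉ X ∧ v ∉ Y) →
      G.Adj u v → s(u, v) ∈ (coverTransversal G A B C X Y : Set (Sym2 V)) := by
    intro u v huv hadj
    refine mem_coe.mpr (mem_image.mpr ⟨(u, v), ?_, rfl⟩)
    simp only [mem_union, mem_filter, mem_product, Set.mem_toFinset] at huv ⊢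
    tauto
  refine ⟨fun e he => ?_, fun t ht => ?_⟩
  · obtain ⟨p, hp, rfl⟩ := mem_image.mp (mem_coe.mp he)
    rcases mem_union.mp hp with hp | hp
    · exact (mem_filter.mp hp).2
    · exact (mem_crossEdges.mp (mem_filter.mp hp).1).2.2
  obtain ⟨a, ha, b, hb, c, hc, haA, hbB, hcC⟩ := h.exists_mem_of_isNClique ht
  obtain ⟨-, hAB, hAC, hBC, -⟩ := h
  have hedge : ∀ {u v}, u ∈ t → v ∈ t → u ≠ v → s(u, v) ∈ triangleEdges t ∧ G.Adj u v :=
    fun hu hv huv => ⟨⟨_, hu, _, hv, huv, rfl⟩, ht.isClique hu hv huv⟩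
  obtain ⟨hab, hab'⟩ := hedge ha hb (hAB.ne_of_mem haA hbB)
  obtain ⟨hac, hac'⟩ := hedge ha hc (hAC.ne_of_mem haA hcC)
  obtain ⟨hbc, hbc'⟩ := hedge hb hc (hBC.ne_of_mem hbB hcC)
  by_cases hbX : b ∈ X
  · exact ⟨_, hab, hmem (Or.inl ⟨haA, mem_union_left _ hbX⟩) hab'⟩
  by_cases hcY : c ∈ Y
  · exact ⟨_, hac, hmem (Or.inl ⟨haA, mem_union_right _ hcY⟩) hac'⟩
  exact ⟨_, hbc, hmem (Or.inr ⟨mem_crossEdges.mpr ⟨hbB, hcC, hbc'⟩, hbX, hcY⟩) hbc'⟩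

lemma card_coverTransversal_le [DecidableEq V] (X Y : Finset V) :
    #(coverTransversal G A B C X Y) ≤ coverCost A.ncard (crossEdges G B C) X Y := by
  classical
  calc #(coverTransversal G A B C X Y)
      ≤ #(A.toFinset ×ˢ (X ∪ Y)) + #{e ∈ crossEdges G B C | e.1 ∉ X ∧ e.2 ∉ Y} :=
        card_image_le.trans <|
          (card_union_le _ _).trans (Nat.add_le_add_right (card_filter_le _ _) _)
    _ ≤ A.ncard * #X + A.ncard * #Y + #{e ∈ crossEdges G B C | e.1 ∉ X ∧ e.2 ∉ Y} := by
      rw [card_product, Set.ncard_eq_toFinset_card', ← mul_add]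
      gcongr
      exact card_union_le _ _

/-- Every edge `bc` of colour `a` gives the triangle `abc`. -/
lemma card_le_triPackingNum_of_isProperEdgeColoring (h : IsTripartition G A B C)
    (hAB : CompleteSide G A B) (hAC : CompleteSide G A C) {U : Finset (V × V)}
    (hUE : U ⊆ crossEdges G B C) {col : V × V → A} (hcol : IsProperEdgeColoring U col) :
    #U ≤ triPackingNum G := by
  classical
  have hU : ∀ e ∈ U, e.1 ∈ B ∧ e.2 ∈ C ∧ G.Adj e.1 e.2 := fun e he => mem_crossEdges.mp (hUE he)
  set tri : V × V → Finset V := fun e => {(col e : V), e.1, e.2}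
  have htri : ∀ e ∈ U, G.IsNClique 3 (tri e) := fun e he => is3Clique_triple_iff.mpr
    ⟨hAB _ (col e).2 _ (hU e he).1, hAC _ (col e).2 _ (hU e he).2.1, (hU e he).2.2⟩
  have hinter : ∀ e ∈ U, ∀ f ∈ U, e ≠ f → #(tri e ∩ tri f) ≤ 1 := by
    intro e he f hf hef
    obtain ⟨-, hAB, hAC, hBC, -⟩ := h
    exact card_inter_le_one_of_mem_parts hAB hAC hBC (col e).2 (col f).2 (hU e he).1
      (hU f hf).1 (hU e he).2.1 (hU f hf).2.1
      (fun h₁ h₂ => hcol e he f hf hef (Or.inl h₂) (Subtype.ext h₁))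
      (fun h₁ h₂ => hcol e he f hf hef (Or.inr h₂) (Subtype.ext h₁))
      (fun h₁ h₂ => hef (Prod.ext h₁ h₂))
  have hinj : Set.InjOn tri U := by
    intro e he f hf hef
    by_contra hne
    have := hinter e he f hf hne
    rw [hef, inter_self, (htri f hf).card_eq] at this
    omega
  have hpack : IsTriPacking G ↑(U.image tri) := by
    refine ⟨fun t ht => ?_, fun t ht t' ht' htt' => ?_⟩
    · obtain ⟨e, he, rfl⟩ := mem_image.mp ht
      exact htri e he
    · obtain ⟨e, he, rfl⟩ := mem_image.mp ht
      obtain ⟨f, hf, rfl⟩ := mem_image.mp ht'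
      exact disjoint_triangleEdges_of_card_inter_le_one
        (hinter e he f hf fun hef => htt' (hef ▸ rfl))
  calc #U = (↑(U.image tri) : Set (Finset V)).ncard := by
        rw [Set.ncard_coe_finset, card_image_of_injOn hinj]
    _ ≤ triPackingNum G := le_triPackingNum hpack

lemma minCoverCost_le_triPackingNum [DecidableEq V] (h : IsTripartition G A B C)
    (hAB : CompleteSide G A B) (hAC : CompleteSide G A C) :
    minCoverCost A.ncard (crossEdges G B C) ≤ triPackingNum G := by
  obtain ⟨U, hUE, hUdeg, hUcard⟩ :=
    exists_subset_maxDegreeLE_minCoverCost_le A.ncard (crossEdges G B C)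
  -- colouring `U` by `A` needs `A ≠ ∅`, which holds unless `U = ∅`
  rcases U.eq_empty_or_nonempty with rfl | ⟨e₀, he₀⟩
  · simp_all
  classical
  have hcardA : Fintype.card A = A.ncard :=
    Nat.card_eq_fintype_card.symm.trans (Nat.card_coe_set_eq A)
  have : Nonempty A := Fintype.card_pos_iff.mp <| hcardA ▸
    (show 0 < degFst U e₀.1 from card_pos.mpr ⟨e₀, mem_filter.mpr ⟨he₀, rfl⟩⟩).trans_le
      (hUdeg.1 e₀.1)
  obtain ⟨col, hcol⟩ := exists_isProperEdgeColoring (κ := A) U (hcardA ▸ hUdeg)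
  exact hUcard.trans (card_le_triPackingNum_of_isProperEdgeColoring h hAB hAC hUE hcol)

theorem triTransversalNum_eq_triPackingNum_of_completeSide (h : IsTripartition G A B C)
    (hAB : CompleteSide G A B) (hAC : CompleteSide G A C) :
    triTransversalNum G = triPackingNum G := by
  classical
  obtain ⟨X, Y, hXY⟩ := exists_coverCost_eq_minCoverCost A.ncard (crossEdges G B C)
  refine le_antisymm ?_ (triPackingNum_le_triTransversalNum G)
  calc triTransversalNum G ≤ #(coverTransversal G A B C X Y) :=
        (triTransversalNum_le (isTriTransversal_coverTransversal h X Y)).trans_eq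
          (Set.ncard_coe_finset _)
    _ ≤ coverCost A.ncard (crossEdges G B C) X Y := card_coverTransversal_le X Y
    _ = minCoverCost A.ncard (crossEdges G B C) := hXY
    _ ≤ triPackingNum G := minCoverCost_le_triPackingNum h hAB hAC

end BilaterallyComplete

/-- **Theorem 1.** If `G` is a bilaterally-complete tripartite graph (a tripartite
graph at least two of whose sides are complete bipartite), then `τ△(G) = ν△(G)`. -/
theorem tau_eq_nu_of_bilaterallyComplete [Fintype V] (G : SimpleGraph V)
    (A B C : Set V) (hpart : IsTripartition G A B C)
    (hbc : (CompleteSide G A B ∧ CompleteSide G A C) ∨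
           (CompleteSide G A B ∧ CompleteSide G B C) ∨
           (CompleteSide G A C ∧ CompleteSide G B C)) :
    triTransversalNum G = triPackingNum G := by
  rcases hbc with ⟨hAB, hAC⟩ | ⟨hAB, hBC⟩ | ⟨hAC, hBC⟩
  · exact triTransversalNum_eq_triPackingNum_of_completeSide hpart hAB hAC
  · exact triTransversalNum_eq_triPackingNum_of_completeSide hpart.swap_left hAB.symm hBC
  · exact triTransversalNum_eq_triPackingNum_of_completeSide hpart.swap_right.swap_left
      hAC.symm hBC.symm
end

section
/- Let G = (A,B,C;E) be a bilaterally-complete tripartite graph with complete sides G[A∪B] and G[A∪C]. If E′_BC ⊆ E_BC is any set of edges and, for each vertex a ∈ A, W_a ⊆ B∪C is a vertex cover of the subgraph of G edge-induced by E_BC \ E′_BC, then E′ = E′_BC ∪ ⋃_{a∈A} E_{aW_a} is a 𝒯-transversal of G, and |E′| = |E′_BC| + Σ_{a∈A} |W_a|. -/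
open SimpleGraph

variable {V : Type*}

lemma ncard_biUnion_finset {α β : Type*} (s : Finset α) (S : α → Set β)
    (hfin : ∀ a, (S a).Finite)
    (hdisj : (s : Set α).PairwiseDisjoint S) :
    (⋃ a ∈ s, S a).ncard = ∑ a ∈ s, (S a).ncard := by
  classical
  induction s using Finset.induction with
  | empty => simp
  | @insert a s hx ih =>
    rw [Finset.sum_insert hx]
    have hdisj' : ((s : Set α)).PairwiseDisjoint S := by
      apply hdisj.subset; simp [Set.subset_def]; tauto
    have hd : Disjoint (S a) (⋃ b ∈ s, S b) := by
      rw [Set.disjoint_iUnion_right]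
      intro b
      rw [Set.disjoint_iUnion_right]
      intro hb
      apply hdisj (by simp) (by simp [hb])
      rintro rfl; exact hx hb
    have : (⋃ b ∈ insert a s, S b) = S a ∪ ⋃ b ∈ s, S b := by
      simp [Set.iUnion_or, Set.iUnion_union_distrib]
    rw [this, Set.ncard_union_eq hd (hfin a) (Set.Finite.biUnion s.finite_toSet fun b _ => hfin b),
      ih hdisj']

/-- If `E'_BC ⊆ E_BC` and for each `a ∈ A`, `W a ⊆ B ∪ C` is a vertex cover of the
subgraph edge-induced by `E_BC \ E'_BC`, then `E' = E'_BC ∪ ⋃_{a ∈ A} E_{a,W a}` is a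
`𝒯`-transversal of `G` of cardinality `|E'_BC| + ∑_{a ∈ A} |W a|`. -/
theorem transversal_of_covers [Fintype V] (G : SimpleGraph V)
    (A B C : Set V) (hpart : IsTripartition G A B C)
    (hAB : CompleteSide G A B) (hAC : CompleteSide G A C)
    (E'BC : Set (Sym2 V)) (hE'BC : E'BC ⊆ edgesBetween G B C)
    (W : V → Set V) (hWsub : ∀ a ∈ A, W a ⊆ B ∪ C)
    (hWcov : ∀ a ∈ A, CoversEdges (W a) (edgesBetween G B C \ E'BC)) :
    IsTriTransversal G (E'BC ∪ ⋃ a ∈ A, edgesBetween G {a} (W a)) ∧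
      (E'BC ∪ ⋃ a ∈ A, edgesBetween G {a} (W a)).ncard =
        E'BC.ncard + ∑ᶠ a ∈ A, (W a).ncard := by
  classical
  obtain ⟨huniv, hABd, hACd, hBCd, hAA, hBB, hCC⟩ := hpart
  set S : V → Set (Sym2 V) := fun a => edgesBetween G {a} (W a) with hSdef
  have key : ∀ t : Finset V, ∀ a b c : V, a ∈ A → b ∈ B → c ∈ C →
      a ∈ t → b ∈ t → c ∈ t → G.Adj a b → G.Adj a c → G.Adj b c →
      ∃ e ∈ triangleEdges t, e ∈ E'BC ∪ ⋃ a ∈ A, S a := by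
    intro t a b c hA' hB' hC' hat hbt hct hab hac hbc
    by_cases hbc' : s(b, c) ∈ E'BC
    · exact ⟨s(b, c), ⟨b, hbt, c, hct, G.ne_of_adj hbc, rfl⟩, Or.inl hbc'⟩
    · have hmem : s(b, c) ∈ edgesBetween G B C \ E'BC :=
        ⟨⟨hbc, b, hB', c, hC', rfl⟩, hbc'⟩
      obtain ⟨v, hvW, hve⟩ := hWcov a hA' _ hmem
      have hv : v = b ∨ v = c := by simpa using hve
      have hadj : G.Adj a v := by rcases hv with rfl | rfl <;> assumption
      have hvt : v ∈ t := by rcases hv with rfl | rfl <;> assumption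
      refine ⟨s(a, v), ⟨a, hat, v, hvt, G.ne_of_adj hadj, rfl⟩, Or.inr ?_⟩
      exact Set.mem_biUnion hA' ⟨hadj, a, rfl, v, hvW, rfl⟩
  constructor
  · constructor
    · rintro e (he | he)
      · exact (hE'BC he).1
      · obtain ⟨a, ha, he⟩ := Set.mem_iUnion₂.mp he
        exact he.1
    · intro t ht
      obtain ⟨x, y, z, hxy, hxz, hyz, rfl⟩ := Finset.card_eq_three.mp ht.card_eq
      have htx : x ∈ ({x, y, z} : Finset V) := by simp
      have hty : y ∈ ({x, y, z} : Finset V) := by simp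
      have htz : z ∈ ({x, y, z} : Finset V) := by simp
      have hxy' : G.Adj x y := ht.isClique htx hty hxy
      have hxz' : G.Adj x z := ht.isClique htx htz hxz
      have hyz' : G.Adj y z := ht.isClique hty htz hyz
      have hmem : ∀ v : V, v ∈ A ∨ v ∈ B ∨ v ∈ C := by
        intro v
        have : v ∈ A ∪ B ∪ C := huniv ▸ Set.mem_univ v
        simpa [or_assoc] using this
      rcases hmem x with hx | hx | hx <;> rcases hmem y with hy | hy | hy <;>
        rcases hmem z with hz | hz | hz <;>
        first
        | exact absurd hxy' (hAA _ hx _ hy)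
        | exact absurd hxy' (hBB _ hx _ hy)
        | exact absurd hxy' (hCC _ hx _ hy)
        | exact absurd hxz' (hAA _ hx _ hz)
        | exact absurd hxz' (hBB _ hx _ hz)
        | exact absurd hxz' (hCC _ hx _ hz)
        | exact absurd hyz' (hAA _ hy _ hz)
        | exact absurd hyz' (hBB _ hy _ hz)
        | exact absurd hyz' (hCC _ hy _ hz)
        | exact key _ x y z hx hy hz htx hty htz hxy' hxz' hyz'
        | exact key _ x z y hx hz hy htx htz hty hxz' hxy' hyz'.symm
        | exact key _ y x z hy hx hz hty htx htz hxy'.symm hyz' hxz'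
        | exact key _ z x y hz hx hy htz htx hty hxz'.symm hyz'.symm hxy'
        | exact key _ y z x hy hz hx hty htz htx hyz' hxy'.symm hxz'.symm
        | exact key _ z y x hz hy hx htz hty htx hyz'.symm hxz'.symm hxy'.symm
  · have hnotB : ∀ a ∈ A, a ∉ B ∪ C := by
      rintro a ha (h | h)
      · exact hABd.ne_of_mem ha h rfl
      · exact hACd.ne_of_mem ha h rfl
    have hSimg : ∀ a ∈ A, S a = (fun w => s(a, w)) '' W a := by
      intro a ha
      ext e
      simp only [hSdef, edgesBetween, Set.mem_setOf_eq, Set.mem_image,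
        Set.mem_singleton_iff]
      constructor
      · rintro ⟨-, u, rfl, w, hw, rfl⟩; exact ⟨w, hw, rfl⟩
      · rintro ⟨w, hw, rfl⟩
        refine ⟨?_, a, rfl, w, hw, rfl⟩
        rcases hWsub a ha hw with hwB | hwC
        · exact hAB a ha w hwB
        · exact hAC a ha w hwC
    have hSncard : ∀ a ∈ A, (S a).ncard = (W a).ncard := by
      intro a ha
      rw [hSimg a ha]
      apply Set.ncard_image_of_injOn
      intro w hw w' hw' h
      rw [Sym2.eq_iff] at h
      rcases h with ⟨-, h⟩ | ⟨h1, h2⟩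
      · exact h
      · exact absurd (hWsub a ha hw') (by rw [← h1]; intro hc; exact hnotB a ha hc)
    have hdisjU : Disjoint E'BC (⋃ a ∈ A, S a) := by
      rw [Set.disjoint_left]
      intro e he hc
      obtain ⟨-, b, hb, c, hcC, rfl⟩ := hE'BC he
      obtain ⟨a, ha, -, u, rfl, w, hw, heq⟩ := Set.mem_iUnion₂.mp hc
      rw [Sym2.eq_iff] at heq
      rcases heq with ⟨h1, -⟩ | ⟨-, h2⟩
      · exact hnotB u ha (Or.inl (h1 ▸ hb))
      · exact hnotB u ha (Or.inr (h2 ▸ hcC))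
    have hpair : A.PairwiseDisjoint S := by
      intro a ha a' ha' hne
      rw [Function.onFun, Set.disjoint_left]
      rintro e ⟨-, u, rfl, w, hw, rfl⟩ ⟨-, u', rfl, w', hw', heq⟩
      rw [Sym2.eq_iff] at heq
      rcases heq with ⟨h1, -⟩ | ⟨h1, -⟩
      · exact hne h1
      · exact hnotB u ha (hWsub u' ha' (by rwa [← h1] at hw'))
    have hUeq : (⋃ a ∈ A, S a) = ⋃ a ∈ A.toFinset, S a := by simp
    rw [Set.ncard_union_eq hdisjU (Set.toFinite _) (Set.toFinite _)]
    congr 1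
    rw [hUeq, ncard_biUnion_finset _ _ (fun a => Set.toFinite _)
      (by simpa using hpair)]
    conv_rhs => rw [← Set.coe_toFinset A, finsum_mem_coe_finset]
    exact Finset.sum_congr rfl fun a ha => hSncard a (Set.mem_toFinset.mp ha)
end

section
/- Let G = (A,B,C;E) be a bilaterally-complete tripartite graph with complete sides G[A∪B] and G[A∪C], and let E′ be a 𝒯-transversal of G. Then for every vertex a ∈ A, the set W_a = {v ∈ B∪C : av ∈ E′} is a vertex cover of the subgraph of G edge-induced by E_BC \ (E′ ∩ E_BC). -/
open SimpleGraph

variable {V : Type*}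

/-- If `E'` is a `𝒯`-transversal of a bilaterally-complete tripartite graph `G` with
complete sides `G[A∪B]` and `G[A∪C]`, then for every `a ∈ A` the set
`W_a = {v ∈ B ∪ C : av ∈ E'}` is a vertex cover of the subgraph edge-induced by
`E_BC \ (E' ∩ E_BC)`. -/
theorem covers_of_transversal [Fintype V] (G : SimpleGraph V)
    (A B C : Set V) (hpart : IsTripartition G A B C)
    (hAB : CompleteSide G A B) (hAC : CompleteSide G A C)
    (E' : Set (Sym2 V)) (hE' : IsTriTransversal G E')
    (a : V) (ha : a ∈ A) :
    CoversEdges {v | v ∈ B ∪ C ∧ s(a, v) ∈ E'}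
      (edgesBetween G B C \ (E' ∩ edgesBetween G B C)) := by
  intro e he
  obtain ⟨⟨heG, b, hb, c, hc, rfl⟩, hnotE'⟩ := he
  have hbc : G.Adj b c := by rwa [SimpleGraph.mem_edgeSet] at heG
  have hab : G.Adj a b := hAB a ha b hb
  have hac : G.Adj a c := hAC a ha c hc
  classical
  have hclique : G.IsNClique 3 ({a, b, c} : Finset V) := by
    refine ⟨?_, ?_⟩
    · intro x hx y hy hxy
      simp only [Finset.coe_insert, Finset.coe_singleton, Set.mem_insert_iff,
        Set.mem_singleton_iff] at hx hy
      rcases hx with rfl | rfl | rfl <;> rcases hy with rfl | rfl | rfl <;>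
        first | exact absurd rfl hxy | assumption |
          (first | exact hab.symm | exact hac.symm | exact hbc.symm)
    · rw [Finset.card_insert_of_notMem, Finset.card_insert_of_notMem,
        Finset.card_singleton]
      · simp only [Finset.mem_singleton]; exact hbc.ne
      · simp only [Finset.mem_insert, Finset.mem_singleton]
        push_neg
        exact ⟨hab.ne, hac.ne⟩
  obtain ⟨f, ⟨u, hu, v, hv, huv, rfl⟩, hfE'⟩ := hE'.2 _ hclique
  simp only [Finset.mem_insert, Finset.mem_singleton] at hu hv
  have hbcE' : s(b, c) ∉ E' := fun h => hnotE' ⟨h, heG, b, hb, c, hc, rfl⟩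
  have key : ∀ x y : V, x = a ∨ x = b ∨ x = c → y = a ∨ y = b ∨ y = c →
      x ≠ y → s(x, y) ∈ E' → ∃ w ∈ {v | v ∈ B ∪ C ∧ s(a, v) ∈ E'}, w ∈ s(b, c) := by
    intro x y hx hy hxy hmem
    rcases hx with rfl | rfl | rfl <;> rcases hy with rfl | rfl | rfl
    · exact absurd rfl hxy
    · exact ⟨y, ⟨Or.inl hb, hmem⟩, by simp⟩
    · exact ⟨y, ⟨Or.inr hc, hmem⟩, by simp⟩
    · exact ⟨x, ⟨Or.inl hb, by rwa [Sym2.eq_swap]⟩, by simp⟩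
    · exact absurd rfl hxy
    · exact absurd hmem hbcE'
    · exact ⟨x, ⟨Or.inr hc, by rwa [Sym2.eq_swap]⟩, by simp⟩
    · exact absurd (by rwa [Sym2.eq_swap] at hmem) hbcE'
    · exact absurd rfl hxy
  exact key u v hu hv huv hfE'
end

section
/- Let G = (A,B,C;E) be a bilaterally-complete tripartite graph with complete sides G[A∪B] and G[A∪C]. Then G has a minimum 𝒯-transversal that is uniform, i.e. of the form E′ = E′_BC ∪ E_{AW} for some E′_BC ⊆ E_BC and some vertex cover W ⊆ B∪C of the subgraph of G edge-induced by E_BC \ E′_BC. -/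
open SimpleGraph

variable {V : Type*}

lemma tE_cases [DecidableEq V] {a b c : V} {e : Sym2 V} (h : e ∈ triangleEdges ({a,b,c} : Finset V)) :
    e = s(a,b) ∨ e = s(a,c) ∨ e = s(b,c) := by
  obtain ⟨u, hu, v, hv, huv, rfl⟩ := h
  simp only [Finset.mem_insert, Finset.mem_singleton] at hu hv
  rcases hu with rfl|rfl|rfl <;> rcases hv with rfl|rfl|rfl <;>
    first
      | exact absurd rfl huv
      | exact Or.inl rfl
      | exact Or.inr (Or.inl rfl)
      | exact Or.inr (Or.inr rfl)
      | exact Or.inl Sym2.eq_swap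
      | exact Or.inr (Or.inl Sym2.eq_swap)
      | exact Or.inr (Or.inr Sym2.eq_swap)

lemma tri_parts [DecidableEq V] {G : SimpleGraph V} {A B C : Set V} (hpart : IsTripartition G A B C)
    {t : Finset V} (ht : G.IsNClique 3 t) :
    ∃ a ∈ A, ∃ b ∈ B, ∃ c ∈ C, G.Adj a b ∧ G.Adj a c ∧ G.Adj b c ∧ t = {a,b,c} := by
  obtain ⟨x,y,z,hxy,hxz,hyz,rfl⟩ := SimpleGraph.is3Clique_iff.mp ht
  obtain ⟨hU, -, -, -, hA, hB, hC⟩ := hpart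
  have hp : ∀ w : V, w ∈ A ∨ w ∈ B ∨ w ∈ C := by
    intro w
    have : w ∈ A ∪ B ∪ C := hU ▸ Set.mem_univ w
    simpa [Set.mem_union, or_assoc] using this
  rcases hp x with hx|hx|hx <;> rcases hp y with hy|hy|hy <;> rcases hp z with hz|hz|hz <;>
    first
      | exact absurd hxy (hA _ hx _ hy)
      | exact absurd hxz (hA _ hx _ hz)
      | exact absurd hyz (hA _ hy _ hz)
      | exact absurd hxy (hB _ hx _ hy)
      | exact absurd hxz (hB _ hx _ hz)
      | exact absurd hyz (hB _ hy _ hz)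
      | exact absurd hxy (hC _ hx _ hy)
      | exact absurd hxz (hC _ hx _ hz)
      | exact absurd hyz (hC _ hy _ hz)
      | exact ⟨x,hx,y,hy,z,hz,hxy,hxz,hyz,rfl⟩
      | exact ⟨x,hx,z,hz,y,hy,hxz,hxy,hyz.symm,
          by ext u; simp only [Finset.mem_insert, Finset.mem_singleton]; tauto⟩
      | exact ⟨y,hy,x,hx,z,hz,hxy.symm,hyz,hxz,
          by ext u; simp only [Finset.mem_insert, Finset.mem_singleton]; tauto⟩
      | exact ⟨z,hz,x,hx,y,hy,hxz.symm,hyz.symm,hxy,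
          by ext u; simp only [Finset.mem_insert, Finset.mem_singleton]; tauto⟩
      | exact ⟨y,hy,z,hz,x,hx,hyz,hxy.symm,hxz.symm,
          by ext u; simp only [Finset.mem_insert, Finset.mem_singleton]; tauto⟩
      | exact ⟨z,hz,y,hy,x,hx,hyz.symm,hxz.symm,hxy.symm,
          by ext u; simp only [Finset.mem_insert, Finset.mem_singleton]; tauto⟩

/-- A bilaterally-complete tripartite graph `G` with complete sides `G[A∪B]` and
`G[A∪C]` has a minimum `𝒯`-transversal that is uniform, i.e. of the form
`E'_BC ∪ E_{A,W}` where `E'_BC ⊆ E_BC` and `W ⊆ B ∪ C` is a vertex cover of the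
subgraph edge-induced by `E_BC \ E'_BC`. -/
theorem exists_uniform_min_transversal [Fintype V] (G : SimpleGraph V)
    (A B C : Set V) (hpart : IsTripartition G A B C)
    (hAB : CompleteSide G A B) (hAC : CompleteSide G A C) :
    ∃ E' : Set (Sym2 V), IsTriTransversal G E' ∧ E'.ncard = triTransversalNum G ∧
      ∃ E'BC ⊆ edgesBetween G B C, ∃ W ⊆ B ∪ C,
        CoversEdges W (edgesBetween G B C \ E'BC) ∧
        E' = E'BC ∪ edgesBetween G A W := by
  classical
  obtain ⟨hU, hABd, hACd, hBCd, hAA, hBB, hCC⟩ := id hpart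
  -- the minimum transversal number is attained
  have hTne : {n | ∃ E' : Set (Sym2 V), IsTriTransversal G E' ∧ E'.ncard = n}.Nonempty := by
    refine ⟨G.edgeSet.ncard, G.edgeSet, ⟨subset_rfl, fun t ht => ?_⟩, rfl⟩
    obtain ⟨a,ha,b,hb,c,hc,hab,hac,hbc,rfl⟩ := tri_parts hpart ht
    exact ⟨s(a,b), ⟨a, by simp, b, by simp, hab.ne, rfl⟩, hab⟩
  obtain ⟨E₀, hE₀, hE₀card⟩ := Nat.sInf_mem hTne
  have hnum : triTransversalNum G
      = sInf {n | ∃ E' : Set (Sym2 V), IsTriTransversal G E' ∧ E'.ncard = n} := rfl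
  set EBC := edgesBetween G B C with hEBCdef
  set E1 := E₀ ∩ EBC with hE1def
  set R := EBC \ E1 with hRdef
  -- a minimum vertex cover of the remaining B-C edges exists
  have hcovne : {n | ∃ W : Set V, (W ⊆ B ∪ C ∧ CoversEdges W R) ∧ W.ncard = n}.Nonempty := by
    refine ⟨(B ∪ C).ncard, B ∪ C, ⟨subset_rfl, fun e he => ?_⟩, rfl⟩
    obtain ⟨-, u, hu, w, hw, rfl⟩ := he.1
    exact ⟨u, Or.inl hu, by simp⟩
  set k := sInf {n | ∃ W : Set V, (W ⊆ B ∪ C ∧ CoversEdges W R) ∧ W.ncard = n} with hkdef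
  obtain ⟨Wm, ⟨hWmsub, hWmcov⟩, hWmk⟩ := Nat.sInf_mem hcovne
  -- for each a ∈ A, the neighbours of a inside E₀ form a vertex cover of R
  have hWa : ∀ a ∈ A, k ≤ {v | v ∈ B ∪ C ∧ s(a,v) ∈ E₀}.ncard := by
    intro a ha
    apply Nat.sInf_le
    refine ⟨_, ⟨fun v hv => hv.1, ?_⟩, rfl⟩
    rintro e ⟨heBC, hne1⟩
    obtain ⟨hedge, b, hb, c, hc, rfl⟩ := heBC
    have htri : G.IsNClique 3 {a,b,c} :=
      SimpleGraph.is3Clique_triple_iff.mpr ⟨hAB a ha b hb, hAC a ha c hc, hedge⟩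
    obtain ⟨e, heT, heE⟩ := hE₀.2 _ htri
    rcases tE_cases heT with rfl|rfl|rfl
    · exact ⟨b, ⟨Or.inl hb, heE⟩, by simp⟩
    · exact ⟨c, ⟨Or.inr hc, heE⟩, by simp⟩
    · exact absurd ⟨heE, hedge, b, hb, c, hc, rfl⟩ hne1
  have hAfin : A.Finite := Set.toFinite A
  -- the key counting inequality
  have key : A.ncard * k ≤ (E₀ \ EBC).ncard := by
    set Wa : V → Set V := fun a => {v | v ∈ B ∪ C ∧ s(a,v) ∈ E₀} with hWadef
    set S : Finset (Sym2 V) := hAfin.toFinset.biUnion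
        (fun a => (Set.toFinite (Wa a)).toFinset.image (fun v => s(a,v))) with hSdef
    have hSsub : ↑S ⊆ E₀ \ EBC := by
      intro e he
      simp only [hSdef, Finset.coe_biUnion, Set.mem_iUnion, Finset.mem_coe, Finset.mem_image,
        Set.Finite.mem_toFinset, Finset.mem_biUnion] at he
      obtain ⟨a, haA, v, hv, rfl⟩ := he
      refine ⟨hv.2, ?_⟩
      rintro ⟨-, u, hu, w, hw, huv⟩
      rcases Sym2.eq_iff.mp huv with ⟨rfl, rfl⟩ | ⟨rfl, rfl⟩
      · exact Set.disjoint_left.mp hABd haA hu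
      · exact Set.disjoint_left.mp hACd haA hw
    have hcard : S.card = ∑ a ∈ hAfin.toFinset,
        ((Set.toFinite (Wa a)).toFinset.image (fun v => s(a,v))).card := by
      apply Finset.card_biUnion
      intro a ha a' ha' hne
      simp only [Finset.disjoint_left, Finset.mem_image, Set.Finite.mem_toFinset]
      rintro e ⟨v, hv, rfl⟩ ⟨v', hv', heq⟩
      rcases Sym2.eq_iff.mp heq with ⟨rfl, rfl⟩ | ⟨rfl, rfl⟩
      · exact hne rfl
      · rcases hv.1 with h | h
        · exact Set.disjoint_left.mp hABd (hAfin.mem_toFinset.mp ha') h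
        · exact Set.disjoint_left.mp hACd (hAfin.mem_toFinset.mp ha') h
    have himg : ∀ a ∈ hAfin.toFinset, k ≤
        ((Set.toFinite (Wa a)).toFinset.image (fun v => s(a,v))).card := by
      intro a ha
      have haA : a ∈ A := hAfin.mem_toFinset.mp ha
      rw [Finset.card_image_of_injOn, ← Set.ncard_eq_toFinset_card (Wa a)]
      · exact hWa a haA
      · intro v hv v' hv' hvv
        simp only [Finset.coe_sort_coe, Set.Finite.coe_toFinset] at hv hv'
        rcases Sym2.eq_iff.mp hvv with ⟨-, h⟩ | ⟨h1, h2⟩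
        · exact h
        · exact h2.trans h1
    have hsum : hAfin.toFinset.card * k ≤ S.card := by
      rw [hcard, ← smul_eq_mul]
      exact Finset.card_nsmul_le_sum _ _ _ himg
    calc A.ncard * k = hAfin.toFinset.card * k := by
          rw [Set.ncard_eq_toFinset_card _ hAfin]
      _ ≤ S.card := hsum
      _ = (↑S : Set (Sym2 V)).ncard := (Set.ncard_coe_finset S).symm
      _ ≤ (E₀ \ EBC).ncard := Set.ncard_le_ncard hSsub (Set.toFinite _)
  -- the uniform transversal
  set E₂ : Set (Sym2 V) := E1 ∪ edgesBetween G A Wm with hE₂def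
  have hE₂tr : IsTriTransversal G E₂ := by
    constructor
    · rintro e (he | he)
      · exact hE₀.1 he.1
      · exact he.1
    · intro t ht
      obtain ⟨a,ha,b,hb,c,hc,hab,hac,hbc,rfl⟩ := tri_parts hpart ht
      by_cases hbcE : s(b,c) ∈ E1
      · exact ⟨s(b,c), ⟨b, by simp, c, by simp, hbc.ne, rfl⟩, Or.inl hbcE⟩
      · have hmemR : s(b,c) ∈ R := ⟨⟨hbc, b, hb, c, hc, rfl⟩, hbcE⟩
        obtain ⟨w, hwW, hwe⟩ := hWmcov _ hmemR
        rcases Sym2.mem_iff.mp hwe with rfl | rfl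
        · exact ⟨s(a,w), ⟨a, by simp, w, by simp, hab.ne, rfl⟩,
            Or.inr ⟨hab, a, ha, w, hwW, rfl⟩⟩
        · exact ⟨s(a,w), ⟨a, by simp, w, by simp, hac.ne, rfl⟩,
            Or.inr ⟨hac, a, ha, w, hwW, rfl⟩⟩
  have hsize : E₂.ncard ≤ E₀.ncard := by
    have h1 : E₂.ncard ≤ E1.ncard + (edgesBetween G A Wm).ncard := Set.ncard_union_le _ _
    have h2 : (edgesBetween G A Wm).ncard ≤ A.ncard * k := by
      have hsub : edgesBetween G A Wm ⊆ (fun p : V × V => s(p.1, p.2)) '' (A ×ˢ Wm) := by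
        rintro e ⟨-, u, hu, w, hw, rfl⟩
        exact ⟨(u,w), ⟨hu, hw⟩, rfl⟩
      calc (edgesBetween G A Wm).ncard
          ≤ ((fun p : V × V => s(p.1,p.2)) '' (A ×ˢ Wm)).ncard :=
            Set.ncard_le_ncard hsub (Set.toFinite _)
        _ ≤ (A ×ˢ Wm).ncard := Set.ncard_image_le (Set.toFinite _)
        _ = A.ncard * Wm.ncard := by
            rw [← Nat.card_coe_set_eq, ← Nat.card_coe_set_eq,
              ← Nat.card_coe_set_eq, Nat.card_congr (Equiv.Set.prod A Wm), Nat.card_prod]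
        _ = A.ncard * k := by rw [hWmk]
    have h3 : E1.ncard + (E₀ \ EBC).ncard = E₀.ncard := by
      rw [← Set.ncard_union_eq (Set.disjoint_sdiff_right.mono_left Set.inter_subset_right)
        (Set.toFinite _) (Set.toFinite _), Set.inter_union_diff]
    omega
  refine ⟨E₂, hE₂tr, ?_, E1, Set.inter_subset_right, Wm, hWmsub, hWmcov, rfl⟩
  have hle : triTransversalNum G ≤ E₂.ncard := Nat.sInf_le ⟨E₂, hE₂tr, rfl⟩
  have : E₂.ncard ≤ triTransversalNum G := by rw [hnum, ← hE₀card]; exact hsize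
  omega
end

section
/- Let G = (A,B,C;E) be a bilaterally-complete tripartite graph with complete sides G[A∪B] and G[A∪C] and |A| = p. Then τ△(G) = min over E′_BC ⊆ E_BC of ( |E′_BC| + p·β(E′_BC) ), where β(E′_BC) denotes the minimum cardinality of a vertex cover of the subgraph of G edge-induced by E_BC \ E′_BC. -/
open SimpleGraph

variable {V : Type*}

/-- `τ△(G) = min_{E'_BC ⊆ E_BC} ( |E'_BC| + p · β(E'_BC) )`, where `p = |A|` and
`β(E'_BC)` is the minimum cardinality of a vertex cover of the subgraph
edge-induced by `E_BC \ E'_BC`. -/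
lemma triangle_structure {G : SimpleGraph V} {A B C : Set V}
    (hpart : IsTripartition G A B C) {t : Finset V} (ht : G.IsNClique 3 t) :
    ∃ a b c, (a ∈ A ∧ b ∈ B ∧ c ∈ C) ∧ a ∈ t ∧ b ∈ t ∧ c ∈ t ∧ G.Adj b c := by
  classical
  obtain ⟨hpu, _, _, _, hA, hB, hC⟩ := hpart
  have hcl := ht.isClique
  have hcard := ht.card_eq
  obtain ⟨x, y, z, hxy', hxz', hyz', ht'⟩ := Finset.card_eq_three.mp hcard
  have hxt : x ∈ t := by rw [ht']; simp
  have hyt : y ∈ t := by rw [ht']; simp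
  have hzt : z ∈ t := by rw [ht']; simp
  have hxy : G.Adj x y := hcl hxt hyt hxy'
  have hxz : G.Adj x z := hcl hxt hzt hxz'
  have hyz : G.Adj y z := hcl hyt hzt hyz'
  have part : ∀ v : V, v ∈ A ∨ v ∈ B ∨ v ∈ C := by
    intro v
    have : v ∈ A ∪ B ∪ C := hpu ▸ Set.mem_univ v
    simpa [Set.mem_union, or_assoc] using this
  rcases part x with hx | hx | hx <;> rcases part y with hy | hy | hy <;>
    rcases part z with hz | hz | hz <;>
    first
    | exact ⟨x, y, z, ⟨hx, hy, hz⟩, hxt, hyt, hzt, hyz⟩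
    | exact ⟨x, z, y, ⟨hx, hz, hy⟩, hxt, hzt, hyt, hyz.symm⟩
    | exact ⟨y, x, z, ⟨hy, hx, hz⟩, hyt, hxt, hzt, hxz⟩
    | exact ⟨y, z, x, ⟨hy, hz, hx⟩, hyt, hzt, hxt, hxz.symm⟩
    | exact ⟨z, x, y, ⟨hz, hx, hy⟩, hzt, hxt, hyt, hxy⟩
    | exact ⟨z, y, x, ⟨hz, hy, hx⟩, hzt, hyt, hxt, hxy.symm⟩
    | exact absurd hxy (hA _ hx _ hy)
    | exact absurd hxy (hB _ hx _ hy)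
    | exact absurd hxy (hC _ hx _ hy)
    | exact absurd hxz (hA _ hx _ hz)
    | exact absurd hxz (hB _ hx _ hz)
    | exact absurd hxz (hC _ hx _ hz)
    | exact absurd hyz (hA _ hy _ hz)
    | exact absurd hyz (hB _ hy _ hz)
    | exact absurd hyz (hC _ hy _ hz)

/-- main -/
theorem tau_eq_min_cover_formula [Fintype V] (G : SimpleGraph V)
    (A B C : Set V) (hpart : IsTripartition G A B C)
    (hAB : CompleteSide G A B) (hAC : CompleteSide G A C)
    (p : ℕ) (hp : A.ncard = p) :
    triTransversalNum G =
      sInf {n : ℕ | ∃ Y ⊆ edgesBetween G B C,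
        n = Y.ncard + p * sInf {m : ℕ | ∃ W : Set V,
              CoversEdges W (edgesBetween G B C \ Y) ∧ W.ncard = m}} := by
  classical
  obtain ⟨hpu, hdAB, hdAC, hdBC, hAind, hBind, hCind⟩ := id hpart
  set E : Set (Sym2 V) := edgesBetween G B C with hEdef
  set β : Set (Sym2 V) → ℕ :=
    fun Y => sInf {m : ℕ | ∃ W : Set V, CoversEdges W (E \ Y) ∧ W.ncard = m} with hβdef
  -- the cover set is always nonempty
  have hcov_ne : ∀ Y : Set (Sym2 V),
      {m : ℕ | ∃ W : Set V, CoversEdges W (E \ Y) ∧ W.ncard = m}.Nonempty := by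
    intro Y
    refine ⟨(Set.univ : Set V).ncard, Set.univ, ?_, rfl⟩
    rintro e ⟨⟨_, u, hu, w, hw, rfl⟩, -⟩
    exact ⟨u, trivial, by simp⟩
  set S : Set ℕ := {n : ℕ | ∃ Y ⊆ E, n = Y.ncard + p * β Y} with hSdef
  have hS_ne : S.Nonempty := ⟨E.ncard + p * β E, E, subset_rfl, rfl⟩
  -- upper bound: τ ≤ every element of S
  have claim_up : ∀ n ∈ S, triTransversalNum G ≤ n := by
    rintro n ⟨Y, hYE, rfl⟩
    obtain ⟨W, hWcov, hWcard⟩ := Nat.sInf_mem (hcov_ne Y)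
    set W' : Set V := W ∩ (B ∪ C) with hW'def
    have hW'cov : CoversEdges W' (E \ Y) := by
      rintro e he
      obtain ⟨v, hvW, hve⟩ := hWcov e he
      obtain ⟨⟨_, u, hu, w, hw, rfl⟩, -⟩ := he
      rcases Sym2.mem_iff.mp hve with rfl | rfl
      · exact ⟨v, ⟨hvW, Or.inl hu⟩, hve⟩
      · exact ⟨v, ⟨hvW, Or.inr hw⟩, hve⟩
    have hW'card : W'.ncard ≤ β Y :=
      le_trans (Set.ncard_le_ncard Set.inter_subset_left (Set.toFinite W)) (le_of_eq hWcard)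
    set S' : Finset (Sym2 V) :=
      A.toFinset.biUnion (fun a => W'.toFinset.image (fun w => s(a, w))) with hS'def
    have hS'mem : ∀ a ∈ A, ∀ w ∈ W', s(a, w) ∈ S' := by
      intro a ha w hw
      exact Finset.mem_biUnion.mpr ⟨a, Set.mem_toFinset.mpr ha,
        Finset.mem_image.mpr ⟨w, Set.mem_toFinset.mpr hw, rfl⟩⟩
    have hS'edge : ∀ e ∈ S', e ∈ G.edgeSet := by
      intro e he
      obtain ⟨a, ha, he'⟩ := Finset.mem_biUnion.mp he
      obtain ⟨w, hw, rfl⟩ := Finset.mem_image.mp he'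
      have ha' : a ∈ A := Set.mem_toFinset.mp ha
      rcases (Set.mem_toFinset.mp hw).2 with hwB | hwC
      · exact (hAB a ha' w hwB)
      · exact (hAC a ha' w hwC)
    have htrans : IsTriTransversal G (Y ∪ ↑S') := by
      constructor
      · rintro e (he | he)
        · exact (hYE he).1
        · exact hS'edge e he
      · intro t ht
        obtain ⟨a, b, c, ⟨ha, hb, hc⟩, hat, hbt, hct, hbc⟩ := triangle_structure hpart ht
        by_cases hY : s(b, c) ∈ Y
        · exact ⟨s(b, c), ⟨b, hbt, c, hct, hbc.ne, rfl⟩, Or.inl hY⟩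
        · have heE : s(b, c) ∈ E \ Y := ⟨⟨hbc, b, hb, c, hc, rfl⟩, hY⟩
          obtain ⟨v, hvW', hve⟩ := hW'cov _ heE
          have hvt : v ∈ t := by
            rcases Sym2.mem_iff.mp hve with rfl | rfl
            · exact hbt
            · exact hct
          have hav : a ≠ v := by
            rintro rfl
            rcases hvW'.2 with h | h
            · exact (Set.disjoint_left.mp hdAB ha) h
            · exact (Set.disjoint_left.mp hdAC ha) h
          exact ⟨s(a, v), ⟨a, hat, v, hvt, hav, rfl⟩,
            Or.inr (hS'mem a ha v hvW')⟩
    have hsize : (Y ∪ (↑S' : Set (Sym2 V))).ncard ≤ Y.ncard + p * β Y := by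
      refine (Set.ncard_union_le _ _).trans ?_
      rw [Set.ncard_coe_finset]
      gcongr
      calc S'.card ≤ ∑ a ∈ A.toFinset, (W'.toFinset.image (fun w => s(a, w))).card :=
            Finset.card_biUnion_le
        _ ≤ ∑ _a ∈ A.toFinset, W'.ncard := by
            refine Finset.sum_le_sum fun a _ => ?_
            rw [Set.ncard_eq_toFinset_card']
            exact Finset.card_image_le
        _ = p * W'.ncard := by
            rw [Finset.sum_const, smul_eq_mul, ← Set.ncard_eq_toFinset_card', hp]
        _ ≤ p * β Y := by gcongr
    have hmem : (Y ∪ (↑S' : Set (Sym2 V))).ncard ∈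
        {n | ∃ E' : Set (Sym2 V), IsTriTransversal G E' ∧ E'.ncard = n} :=
      ⟨Y ∪ ↑S', htrans, rfl⟩
    exact (Nat.sInf_le hmem).trans hsize
  -- lower bound
  have hLHS_ne : {n | ∃ E' : Set (Sym2 V), IsTriTransversal G E' ∧ E'.ncard = n}.Nonempty := by
    refine ⟨G.edgeSet.ncard, G.edgeSet, ⟨subset_rfl, fun t ht => ?_⟩, rfl⟩
    obtain ⟨a, b, c, _, _, hbt, hct, hbc⟩ := triangle_structure hpart ht
    exact ⟨s(b, c), ⟨b, hbt, c, hct, hbc.ne, rfl⟩, hbc⟩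
  have claim_low : sInf S ≤ triTransversalNum G := by
    obtain ⟨E', hE', hEcard⟩ := Nat.sInf_mem hLHS_ne
    rw [triTransversalNum, ← hEcard]
    set Y : Set (Sym2 V) := E' ∩ E with hYdef
    have hYE : Y ⊆ E := Set.inter_subset_right
    set W : V → Set V := fun a => {v | s(a, v) ∈ E'} with hWdef
    have hcover : ∀ a ∈ A, CoversEdges (W a) (E \ Y) := by
      rintro a ha e ⟨heE, heY⟩
      obtain ⟨heG, b, hb, c, hc, rfl⟩ := heE
      have hbc : G.Adj b c := heG
      have hab : a ≠ b := fun h => (Set.disjoint_left.mp hdAB ha) (h ▸ hb)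
      have hac : a ≠ c := fun h => (Set.disjoint_left.mp hdAC ha) (h ▸ hc)
      have ht : G.IsNClique 3 ({a, b, c} : Finset V) :=
        SimpleGraph.is3Clique_triple_iff.mpr ⟨hAB a ha b hb, hAC a ha c hc, hbc⟩
      obtain ⟨e', ⟨u, hu, v, hv, huv, rfl⟩, he'⟩ := hE'.2 _ ht
      simp only [Finset.mem_insert, Finset.mem_singleton] at hu hv
      have hswap : ∀ x y : V, s(x, y) ∈ E' → s(y, x) ∈ E' := by
        intro x y h; rwa [Sym2.eq_swap] at h
      have hbcY : s(b, c) ∉ E' := fun h => heY ⟨h, ⟨hbc, b, hb, c, hc, rfl⟩⟩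
      rcases hu with rfl | rfl | rfl <;> rcases hv with rfl | rfl | rfl
      · exact absurd rfl huv
      · exact ⟨v, he', Sym2.mem_mk_left _ _⟩
      · exact ⟨v, he', Sym2.mem_mk_right _ _⟩
      · exact ⟨u, hswap _ _ he', Sym2.mem_mk_left _ _⟩
      · exact absurd rfl huv
      · exact absurd he' hbcY
      · exact ⟨u, hswap _ _ he', Sym2.mem_mk_right _ _⟩
      · exact absurd (hswap _ _ he') hbcY
      · exact absurd rfl huv
    have hβle : ∀ a ∈ A, β Y ≤ (W a).ncard := fun a ha =>
      Nat.sInf_le ⟨W a, hcover a ha, rfl⟩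
    set F : V → Finset (Sym2 V) := fun a => (W a).toFinset.image (fun v => s(a, v)) with hFdef
    have hFcard : ∀ a, (F a).card = (W a).ncard := by
      intro a
      rw [Set.ncard_eq_toFinset_card']
      refine Finset.card_image_of_injOn ?_
      intro v _ v' _ h
      rcases Sym2.eq_iff.mp h with ⟨-, h2⟩ | ⟨h1, h2⟩
      · exact h2
      · rw [h2, ← h1]
    have hsub : ∀ a ∈ A.toFinset, F a ⊆ (E' \ Y).toFinset := by
      intro a ha e he
      have ha' : a ∈ A := Set.mem_toFinset.mp ha
      obtain ⟨v, hv, rfl⟩ := Finset.mem_image.mp he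
      have hv2 : v ∈ W a := Set.mem_toFinset.mp hv
      have hvE : s(a, v) ∈ E' := hv2
      refine Set.mem_toFinset.mpr ⟨hvE, fun hY => ?_⟩
      obtain ⟨-, ⟨-, u, hu, w, hw, heq⟩⟩ := hY
      rcases Sym2.eq_iff.mp heq with ⟨h1, -⟩ | ⟨h1, -⟩
      · exact (Set.disjoint_left.mp hdAB ha') (h1 ▸ hu)
      · exact (Set.disjoint_left.mp hdAC ha') (h1 ▸ hw)
    have hdisj : ∀ a ∈ A.toFinset, ∀ a' ∈ A.toFinset, a ≠ a' → Disjoint (F a) (F a') := by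
      intro a ha a' ha' hne
      have ha2 : a ∈ A := Set.mem_toFinset.mp ha
      have ha2' : a' ∈ A := Set.mem_toFinset.mp ha'
      rw [Finset.disjoint_left]
      intro e he he'
      obtain ⟨v, hv, rfl⟩ := Finset.mem_image.mp he
      obtain ⟨v', hv', heq⟩ := Finset.mem_image.mp he'
      have hv2 : v' ∈ W a' := Set.mem_toFinset.mp hv'
      have hvE : s(a', v') ∈ E' := hv2
      rcases Sym2.eq_iff.mp heq.symm with ⟨h1, -⟩ | ⟨h1, h2⟩
      · exact hne h1
      · exact hAind a' ha2' v' (h1 ▸ ha2) (hE'.1 hvE)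
    have hkey : p * β Y ≤ (E' \ Y).ncard := by
      calc p * β Y = ∑ _a ∈ A.toFinset, β Y := by
            rw [Finset.sum_const, smul_eq_mul, ← Set.ncard_eq_toFinset_card', hp]
        _ ≤ ∑ a ∈ A.toFinset, (F a).card := by
            refine Finset.sum_le_sum fun a ha => ?_
            rw [hFcard]
            exact hβle a (Set.mem_toFinset.mp ha)
        _ = (A.toFinset.biUnion F).card := (Finset.card_biUnion hdisj).symm
        _ ≤ (E' \ Y).toFinset.card :=
            Finset.card_le_card (Finset.biUnion_subset.mpr hsub)
        _ = (E' \ Y).ncard := (Set.ncard_eq_toFinset_card' _).symm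
    have hYle : Y.ncard ≤ E'.ncard :=
      Set.ncard_le_ncard Set.inter_subset_left (Set.toFinite E')
    have hdiff : (E' \ Y).ncard = E'.ncard - Y.ncard :=
      Set.ncard_diff Set.inter_subset_left (Set.toFinite Y)
    have : Y.ncard + p * β Y ≤ E'.ncard := by omega
    have hmem2 : Y.ncard + p * β Y ∈ S := ⟨Y, hYE, rfl⟩
    exact (Nat.sInf_le hmem2).trans this
  exact le_antisymm (le_csInf hS_ne claim_up) claim_low
end

section
/- Let G = (A,B,C;E) be a bilaterally-complete tripartite graph with complete sides G[A∪B] and G[A∪C] and |A| = p, and let H(G) be its network graph. If E′ = E′_BC ∪ E_{AB′} ∪ E_{AC′} is a uniform 𝒯-transversal of G (so E′_BC ⊆ E_BC, B′ ⊆ B, C′ ⊆ C, and B′ ∪ C′ is a vertex cover of G[E_BC \ E′_BC]), then the set 𝒱′ consisting of the vertices of V_BC corresponding to E′_BC together with the copies of B′ in each B_i and the copies of C′ in each C_j is an (s,t)-separator of H(G) with |𝒱′| = |E′|. -/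
open SimpleGraph

variable {V : Type*}

/-- The vertices of the network graph `H(G)`: a source, a sink, `p` copies of the
`B`-side vertices, `p` copies of the `C`-side vertices, and one vertex for each
potential edge between `B` and `C`. -/
inductive NetVert (V : Type*) (p : ℕ) where
  | src : NetVert V p
  | snk : NetVert V p
  | bCopy (i : Fin p) (v : V) : NetVert V p
  | cCopy (i : Fin p) (v : V) : NetVert V p
  | mid (e : Sym2 V) : NetVert V p

/-- The arcs of the network graph `H(G)`: from the source to every copy of every
vertex of `B`; for every edge `e = uv ∈ E_BC` (`u ∈ B`, `v ∈ C`), from every copy of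
`u` to the vertex corresponding to `e` and from that vertex to every copy of `v`;
and from every copy of every vertex of `C` to the sink. -/
def netAdj (G : SimpleGraph V) (B C : Set V) (p : ℕ) :
    NetVert V p → NetVert V p → Prop
  | .src, .bCopy _ v => v ∈ B
  | .bCopy _ u, .mid e => u ∈ B ∧ e ∈ edgesBetween G B C ∧ u ∈ e
  | .mid e, .cCopy _ v => v ∈ C ∧ e ∈ edgesBetween G B C ∧ v ∈ e
  | .cCopy _ v, .snk => v ∈ C
  | _, _ => False

/-- The vertices of `H(G)` in `V_BC` corresponding to a set `S` of edges. -/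
def midSet (S : Set (Sym2 V)) (p : ℕ) : Set (NetVert V p) :=
  {x | ∃ e ∈ S, x = NetVert.mid e}

/-- The vertices of `H(G)` in `B_1 ∪ ⋯ ∪ B_p` that are copies of vertices in `S`. -/
def bCopySet (S : Set V) (p : ℕ) : Set (NetVert V p) :=
  {x | ∃ i : Fin p, ∃ v ∈ S, x = NetVert.bCopy i v}

/-- The vertices of `H(G)` in `C_1 ∪ ⋯ ∪ C_p` that are copies of vertices in `S`. -/
def cCopySet (S : Set V) (p : ℕ) : Set (NetVert V p) :=
  {x | ∃ i : Fin p, ∃ v ∈ S, x = NetVert.cCopy i v}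

/-- `S` is an `(s,t)`-separator of the digraph with arc relation `Adj`: a set of
vertices distinct from `s` and `t` whose removal breaks all directed paths from
`s` to `t`. -/
def IsSeparator {α : Type*} (Adj : α → α → Prop) (s t : α) (S : Set α) : Prop :=
  s ∉ S ∧ t ∉ S ∧
    ¬ Relation.ReflTransGen (fun u v => Adj u v ∧ u ∉ S ∧ v ∉ S) s t

/-- If `E' = E'_BC ∪ E_{A,B'} ∪ E_{A,C'}` is a uniform `𝒯`-transversal of the
bilaterally-complete tripartite graph `G` (so `E'_BC ⊆ E_BC`, `B' ⊆ B`, `C' ⊆ C`,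
and `B' ∪ C'` is a vertex cover of `G[E_BC \ E'_BC]`), then the set `𝒱'` consisting
of the vertices of `V_BC` corresponding to `E'_BC` together with the copies of `B'`
in each `B_i` and the copies of `C'` in each `C_j` is an `(s,t)`-separator of the
network graph `H(G)` with `|𝒱'| = |E'|`. -/
theorem separator_of_uniform_transversal [Fintype V] (G : SimpleGraph V)
    (A B C : Set V) (hpart : IsTripartition G A B C)
    (hAB : CompleteSide G A B) (hAC : CompleteSide G A C)
    (p : ℕ) (hp : A.ncard = p)
    (E'BC : Set (Sym2 V)) (B' C' : Set V)
    (hE'BC : E'BC ⊆ edgesBetween G B C) (hB' : B' ⊆ B) (hC' : C' ⊆ C)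
    (hcov : CoversEdges (B' ∪ C') (edgesBetween G B C \ E'BC))
    (htrans : IsTriTransversal G
      (E'BC ∪ edgesBetween G A B' ∪ edgesBetween G A C')) :
    IsSeparator (netAdj G B C p) NetVert.src NetVert.snk
        (midSet E'BC p ∪ bCopySet B' p ∪ cCopySet C' p) ∧
      (midSet E'BC p ∪ bCopySet B' p ∪ cCopySet C' p).ncard =
        (E'BC ∪ edgesBetween G A B' ∪ edgesBetween G A C').ncard := by
  classical
  obtain ⟨hUnion, hABd, hACd, hBCd, hAind, hBind, hCind⟩ := hpart
  set S : Set (NetVert V p) := midSet E'BC p ∪ bCopySet B' p ∪ cCopySet C' p with hS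
  constructor
  · refine ⟨?_, ?_, ?_⟩
    · rintro ((⟨e, _, h⟩ | ⟨i, v, _, h⟩) | ⟨i, v, _, h⟩) <;> simp at h
    · rintro ((⟨e, _, h⟩ | ⟨i, v, _, h⟩) | ⟨i, v, _, h⟩) <;> simp at h
    · intro hreach
      have key : ∀ x : NetVert V p,
          Relation.ReflTransGen (fun u v => netAdj G B C p u v ∧ u ∉ S ∧ v ∉ S)
            NetVert.src x →
          (x = .src ∨ (∃ i v, v ∈ B ∧ v ∉ B' ∧ x = .bCopy i v) ∨
            (∃ e, e ∈ edgesBetween G B C ∧ e ∉ E'BC ∧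
              (∃ u ∈ B, u ∉ B' ∧ u ∈ e) ∧ x = .mid e)) := by
        intro x hx
        induction hx with
        | refl => exact Or.inl rfl
        | @tail b c hb hstep ih =>
          obtain ⟨hadj, hbS, hcS⟩ := hstep
          rcases ih with rfl | ⟨i, v, hvB, hvB', rfl⟩ | ⟨e, heBC, heE', ⟨u, huB, huB', hue⟩, rfl⟩
          · cases c with
            | bCopy j w =>
              refine Or.inr (Or.inl ⟨j, w, hadj, ?_, rfl⟩)
              intro hw
              exact hcS (Or.inl (Or.inr ⟨j, w, hw, rfl⟩))
            | src => exact absurd hadj not_false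
            | snk => exact absurd hadj not_false
            | cCopy j w => exact absurd hadj not_false
            | mid e => exact absurd hadj not_false
          · cases c with
            | mid e =>
              obtain ⟨_, heBC, hve⟩ := hadj
              refine Or.inr (Or.inr ⟨e, heBC, ?_, ⟨v, hvB, hvB', hve⟩, rfl⟩)
              intro he
              exact hcS (Or.inl (Or.inl ⟨e, he, rfl⟩))
            | src => exact absurd hadj not_false
            | snk => exact absurd hadj not_false
            | bCopy j w => exact absurd hadj not_false
            | cCopy j w => exact absurd hadj not_false
          · cases c with
            | cCopy j w =>
              obtain ⟨hwC, _, hwe⟩ := hadj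
              have hwC' : w ∉ C' := fun hw => hcS (Or.inr ⟨j, w, hw, rfl⟩)
              obtain ⟨z, hz, hze⟩ := hcov e ⟨heBC, heE'⟩
              obtain ⟨_, b0, hb0, c0, hc0, rfl⟩ := heBC
              rw [Sym2.mem_iff] at hue hwe hze
              have hub0 : u = b0 := by
                rcases hue with rfl | rfl
                · rfl
                · exact absurd huB (Set.disjoint_right.mp hBCd hc0)
              have hwc0 : w = c0 := by
                rcases hwe with rfl | rfl
                · exact absurd hwC (Set.disjoint_left.mp hBCd hb0)
                · rfl
              rcases hz with hzB | hzC
              · have : z = b0 := by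
                  rcases hze with rfl | rfl
                  · rfl
                  · exact absurd (hB' hzB) (Set.disjoint_right.mp hBCd hc0)
                exact absurd (this ▸ hzB) (hub0 ▸ huB')
              · have : z = c0 := by
                  rcases hze with rfl | rfl
                  · exact absurd (hC' hzC) (Set.disjoint_left.mp hBCd hb0)
                  · rfl
                exact absurd (this ▸ hzC) (hwc0 ▸ hwC')
            | src => exact absurd hadj not_false
            | snk => exact absurd hadj not_false
            | bCopy j w => exact absurd hadj not_false
            | mid e' => exact absurd hadj not_false
      rcases key _ hreach with h | ⟨i, v, _, _, h⟩ | ⟨e, _, _, _, h⟩ <;> simp at h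
  · -- cardinality
    have hAfin : A.Finite := Set.toFinite A
    have hcard : hAfin.toFinset.card = p := by
      rw [← Set.ncard_eq_toFinset_card A hAfin]; exact hp
    obtain ⟨a, hainj, haA, hasurj⟩ :
        ∃ a : Fin p → V, Function.Injective a ∧ (∀ i, a i ∈ A) ∧
          ∀ x ∈ A, ∃ i, a i = x := by
      have hcard' : hAfin.toFinset.card = p := hcard
      let σ := hAfin.toFinset.equivFinOfCardEq hcard'
      refine ⟨fun i => (σ.symm i : V), ?_, ?_, ?_⟩
      · intro i j hij
        exact σ.symm.injective (Subtype.ext hij)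
      · intro i
        have := (σ.symm i).2
        simpa [Set.Finite.mem_toFinset] using this
      · intro x hx
        refine ⟨σ ⟨x, by simpa [Set.Finite.mem_toFinset] using hx⟩, ?_⟩
        simp
    set f : NetVert V p → Option (Sym2 V) := fun x =>
      match x with
      | .mid e => some e
      | .bCopy i v => some s(a i, v)
      | .cCopy i v => some s(a i, v)
      | _ => none with hf
    have hAB' : ∀ x ∈ A, x ∉ B := fun x hx => Set.disjoint_left.mp hABd hx
    have hAC' : ∀ x ∈ A, x ∉ C := fun x hx => Set.disjoint_left.mp hACd hx
    have hBC' : ∀ x ∈ B, x ∉ C := fun x hx => Set.disjoint_left.mp hBCd hx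
    -- mid edges vs copy edges never coincide
    have hmidne : ∀ e ∈ edgesBetween G B C, ∀ (i : Fin p) (v : V), v ∈ B ∪ C →
        e ≠ s(a i, v) := by
      rintro e ⟨_, b0, hb0, c0, hc0, rfl⟩ i v hv h
      rw [Sym2.eq_iff] at h
      rcases h with ⟨h1, _⟩ | ⟨_, h2⟩
      · exact hAB' (a i) (haA i) (h1 ▸ hb0)
      · exact hAC' (a i) (haA i) (h2 ▸ hc0)
    have hbcne : ∀ (i j : Fin p) (v w : V), v ∈ B → w ∈ C →
        s(a i, v) ≠ s(a j, w) := by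
      intro i j v w hv hw h
      rw [Sym2.eq_iff] at h
      rcases h with ⟨_, h2⟩ | ⟨h1, _⟩
      · exact hBC' v hv (h2 ▸ hw)
      · exact hAC' (a i) (haA i) (h1 ▸ hw)
    have himg : f '' S =
        some '' (E'BC ∪ edgesBetween G A B' ∪ edgesBetween G A C') := by
      ext y
      constructor
      · rintro ⟨x, ((⟨e, he, rfl⟩ | ⟨i, v, hv, rfl⟩) | ⟨i, v, hv, rfl⟩), rfl⟩
        · exact ⟨e, Or.inl (Or.inl he), rfl⟩
        · refine ⟨s(a i, v), Or.inl (Or.inr ⟨?_, a i, haA i, v, hv, rfl⟩), rfl⟩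
          exact (hAB (a i) (haA i) v (hB' hv))
        · refine ⟨s(a i, v), Or.inr ⟨?_, a i, haA i, v, hv, rfl⟩, rfl⟩
          exact (hAC (a i) (haA i) v (hC' hv))
      · rintro ⟨e, ((he | ⟨_, u, hu, w, hw, rfl⟩) | ⟨_, u, hu, w, hw, rfl⟩), rfl⟩
        · exact ⟨.mid e, Or.inl (Or.inl ⟨e, he, rfl⟩), rfl⟩
        · obtain ⟨i, rfl⟩ := hasurj u hu
          exact ⟨.bCopy i w, Or.inl (Or.inr ⟨i, w, hw, rfl⟩), rfl⟩
        · obtain ⟨i, rfl⟩ := hasurj u hu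
          exact ⟨.cCopy i w, Or.inr ⟨i, w, hw, rfl⟩, rfl⟩
    have hinj : Set.InjOn f S := by
      rintro x1 ((⟨e1, he1, rfl⟩ | ⟨i1, v1, hv1, rfl⟩) | ⟨i1, v1, hv1, rfl⟩)
        x2 ((⟨e2, he2, rfl⟩ | ⟨i2, v2, hv2, rfl⟩) | ⟨i2, v2, hv2, rfl⟩) hfx <;>
        simp only [hf, Option.some.injEq] at hfx
      · rw [hfx]
      · exact absurd hfx (hmidne e1 (hE'BC he1) i2 v2 (Or.inl (hB' hv2)))
      · exact absurd hfx (hmidne e1 (hE'BC he1) i2 v2 (Or.inr (hC' hv2)))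
      · exact absurd hfx.symm (hmidne e2 (hE'BC he2) i1 v1 (Or.inl (hB' hv1)))
      · rw [Sym2.eq_iff] at hfx
        rcases hfx with ⟨h1, h2⟩ | ⟨h1, h2⟩
        · rw [hainj h1, h2]
        · exact absurd (h2 ▸ haA i2) (fun h => hAB' _ h (hB' hv1))
      · exact absurd hfx (hbcne i1 i2 v1 v2 (hB' hv1) (hC' hv2))
      · exact absurd hfx.symm (hmidne e2 (hE'BC he2) i1 v1 (Or.inr (hC' hv1)))
      · exact absurd hfx.symm (hbcne i2 i1 v2 v1 (hB' hv2) (hC' hv1))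
      · rw [Sym2.eq_iff] at hfx
        rcases hfx with ⟨h1, h2⟩ | ⟨h1, h2⟩
        · rw [hainj h1, h2]
        · exact absurd (h2 ▸ haA i2) (fun h => hAC' _ h (hC' hv1))
    calc S.ncard = (f '' S).ncard := (Set.ncard_image_of_injOn hinj).symm
      _ = (some '' (E'BC ∪ edgesBetween G A B' ∪ edgesBetween G A C')).ncard := by
          rw [himg]
      _ = (E'BC ∪ edgesBetween G A B' ∪ edgesBetween G A C').ncard :=
          Set.ncard_image_of_injective _ (Option.some_injective _)
end

section
/- Let G = (A,B,C;E) be a bilaterally-complete tripartite graph with complete sides G[A∪B] and G[A∪C] and |A| = p. Then the bipartite graph G[B∪C] contains a subgraph F with exactly τ△(G) edges whose maximum degree is at most p. -/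
open SimpleGraph

variable {V : Type*}

/-!
Let `H = G[B ∪ C]` and let `F` be a maximum simple `p`-matching of `H`: a largest set of edges of
`H` in which every vertex has degree at most `p`. As in König's theorem, maximality means that no
alternating path joins an unsaturated vertex of `B` to an unsaturated vertex of `C`, and the
vertices reachable by alternating paths from unsaturated vertices of `B` determine a set
`W ⊆ B ∪ C` with `p |W| + |E(H - W)| ≤ |F|`. Every triangle of `G` has one vertex in each part,
so the edges between `A` and `W` together with the edges of `H - W` meet every triangle. Hence
`τ△(G) ≤ p |W| + |E(H - W)| ≤ |F|`, and any `τ△(G)` edges of `F` form the required subgraph.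
-/

open Finset

theorem List.exists_nodup_isChain_cons_of_relationReflTransGen {α : Type*} {r : α → α → Prop}
    {a b : α} (h : Relation.ReflTransGen r a b) :
    ∃ l, IsChain r (a :: l) ∧ (a :: l).Nodup ∧ (a :: l).getLast (cons_ne_nil _ _) = b := by
  induction h using Relation.ReflTransGen.head_induction_on with
  | refl => exact ⟨[], .singleton _, nodup_singleton _, rfl⟩
  | @head a d had _ ih =>
    obtain ⟨l, hchain, hnodup, hlast⟩ := ih
    by_cases ha : a ∈ d :: l
    · -- cut out the cycle through `a`
      obtain ⟨s, t, hst⟩ := append_of_mem ha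
      rw [hst] at hchain hnodup
      refine ⟨t, hchain.right_of_append, hnodup.of_append_right, ?_⟩
      simpa [hst] using hlast
    · exact ⟨d :: l, hchain.cons_cons had, nodup_cons.mpr ⟨ha, hnodup⟩, by
        rwa [getLast_cons_cons]⟩

section EdgeDegree

variable [DecidableEq V]

def edgeDegree (F : Finset (Sym2 V)) (v : V) : ℕ := #{e ∈ F | v ∈ e}

variable {F F' : Finset (Sym2 V)} {e : Sym2 V}

lemma edgeDegree_mono (h : F ⊆ F') (v : V) : edgeDegree F v ≤ edgeDegree F' v :=
  card_le_card (filter_subset_filter _ h)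

lemma edgeDegree_insert (he : e ∉ F) (v : V) :
    edgeDegree (insert e F) v = edgeDegree F v + if v ∈ e then 1 else 0 := by
  unfold edgeDegree
  rw [filter_insert]
  split_ifs
  · exact card_insert_of_notMem fun h => he (mem_filter.mp h).1
  · rfl

lemma edgeDegree_erase_add (he : e ∈ F) (v : V) :
    edgeDegree (F.erase e) v + (if v ∈ e then 1 else 0) = edgeDegree F v := by
  unfold edgeDegree
  rw [filter_erase]
  split_ifs with hv
  · exact card_erase_add_one (mem_filter.mpr ⟨he, hv⟩)
  · have he' : e ∉ {x ∈ F | v ∈ x} := fun h => hv (mem_filter.mp h).2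
    rw [erase_eq_of_notMem he', add_zero]

lemma edgeDegree_insert_erase_add {x y : Sym2 V} (hx : x ∉ F.erase y) (hy : y ∈ F) (v : V) :
    edgeDegree (insert x (F.erase y)) v + (if v ∈ y then 1 else 0) =
      edgeDegree F v + if v ∈ x then 1 else 0 := by
  rw [edgeDegree_insert hx, ← edgeDegree_erase_add hy v]
  ring

lemma ncard_coe_filter_mem (F : Finset (Sym2 V)) (v : V) :
    {e ∈ (F : Set (Sym2 V)) | v ∈ e}.ncard = edgeDegree F v := by
  rw [edgeDegree, ← Set.ncard_coe_finset, coe_filter]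
  rfl

lemma sum_edgeDegree_add_card_filter_le {W : Finset V}
    (hW : ∀ e ∈ F, ∀ u ∈ W, ∀ w ∈ W, u ∈ e → w ∈ e → u = w) :
    ∑ w ∈ W, edgeDegree F w + #{e ∈ F | ∀ w ∈ W, w ∉ e} ≤ #F := by
  have hswap : ∑ w ∈ W, edgeDegree F w = ∑ e ∈ F, #{w ∈ W | w ∈ e} := by
    simp only [edgeDegree, card_filter]
    exact sum_comm
  rw [hswap, card_filter, ← sum_add_distrib, card_eq_sum_ones]
  refine sum_le_sum fun e he => ?_
  split_ifs with hfree
  · simp [filter_false_of_mem hfree]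
  · exact card_le_one.mpr fun u hu w hw =>
      hW e he u (mem_filter.mp hu).1 w (mem_filter.mp hw).1 (mem_filter.mp hu).2
        (mem_filter.mp hw).2

end EdgeDegree

section Residual

variable {B C : Set V} {E F : Finset (Sym2 V)} {u v : V}

variable (B C E) in
/-- The residual digraph of `F ⊆ E` in the bipartite graph with parts `B`, `C`: its directed
paths are the alternating paths for `F`. -/
def residualAdj (F : Finset (Sym2 V)) (u v : V) : Prop :=
  (u ∈ B ∧ v ∈ C ∧ s(u, v) ∈ E ∧ s(u, v) ∉ F) ∨ (u ∈ C ∧ v ∈ B ∧ s(u, v) ∈ F)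

lemma residualAdj.of_mem_left (hBC : Disjoint B C) (h : residualAdj B C E F u v) (hu : u ∈ B) :
    v ∈ C ∧ s(u, v) ∈ E ∧ s(u, v) ∉ F :=
  h.elim (fun h => h.2) fun h => (Set.disjoint_left.mp hBC hu h.1).elim

lemma residualAdj.of_mem_right (hBC : Disjoint B C) (h : residualAdj B C E F u v) (hu : u ∈ C) :
    v ∈ B ∧ s(u, v) ∈ F :=
  h.elim (fun h => (Set.disjoint_left.mp hBC h.1 hu).elim) fun h => h.2

lemma residualAdj_congr {F' : Finset (Sym2 V)} (h : s(u, v) ∈ F ↔ s(u, v) ∈ F') :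
    residualAdj B C E F u v ↔ residualAdj B C E F' u v := by
  simp only [residualAdj, h]

lemma List.IsChain.residualAdj_insert_erase [DecidableEq V] {c : V} {x y : Sym2 V} (hx : c ∈ x)
    (hy : c ∈ y) {l : List V} (hl : c ∉ l) (h : List.IsChain (residualAdj B C E F) l) :
    List.IsChain (residualAdj B C E (insert x (F.erase y))) l := by
  refine h.imp_of_mem_imp fun u w hu hw => (residualAdj_congr ?_).mp
  have hux : s(u, w) ≠ x := by rintro rfl; rcases Sym2.mem_iff.mp hx with rfl | rfl <;> contradiction
  have huy : s(u, w) ≠ y := by rintro rfl; rcases Sym2.mem_iff.mp hy with rfl | rfl <;> contradiction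
  simp [hux, huy]

/-- On a simple alternating path `b, c, b', …, z`, exchanging the first two edges moves the spare
capacity from `b` to `b'` and leaves the residual digraph unchanged along the rest of the path,
since both exchanged edges contain `c`. -/
theorem exists_card_succ_of_isChain_residualAdj [DecidableEq V] (hBC : Disjoint B C)
    (k : V → ℕ) :
    ∀ (l : List V) (F : Finset (Sym2 V)) (b z : V), F ⊆ E → (∀ v, edgeDegree F v ≤ k v) →
      b ∈ B → edgeDegree F b < k b → List.IsChain (residualAdj B C E F) (b :: l) →
      (b :: l).Nodup → (b :: l).getLast (List.cons_ne_nil _ _) = z → z ∈ C →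
      edgeDegree F z < k z → ∃ F' ⊆ E, (∀ v, edgeDegree F' v ≤ k v) ∧ #F' = #F + 1
  | [], _, b, _, _, _, hb, _, _, _, hz, hzC, _ =>
    (Set.disjoint_left.mp hBC hb ((show b = _ from hz) ▸ hzC)).elim
  | [c], F, b, z, hFE, hF, hb, hbk, hchain, _, hz, _, hzk => by
    obtain ⟨-, hbcE, hbcF⟩ := (List.isChain_pair.mp hchain).of_mem_left hBC hb
    obtain rfl : c = z := hz
    refine ⟨insert s(b, c) F, insert_subset hbcE hFE, fun v => ?_, card_insert_of_notMem hbcF⟩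
    rw [edgeDegree_insert hbcF]
    split_ifs with hv
    · rcases Sym2.mem_iff.mp hv with rfl | rfl <;> omega
    · exact (add_zero _).trans_le (hF v)
  | c :: b' :: rest, F, b, z, hFE, hF, hb, hbk, hchain, hnodup, hz, hzC, hzk => by
    obtain ⟨hbc, hcb', hchain'⟩ : residualAdj B C E F b c ∧ residualAdj B C E F c b' ∧
        List.IsChain (residualAdj B C E F) (b' :: rest) := by
      simpa only [List.isChain_cons_cons] using hchain
    obtain ⟨hc, hbcE, hbcF⟩ := hbc.of_mem_left hBC hb
    obtain ⟨hb', hcb'F⟩ := hcb'.of_mem_right hBC hc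
    obtain ⟨hb_tail, hc_tail, hnodup'⟩ := List.nodup_cons.mp hnodup |>.imp_right List.nodup_cons.mp
    set F' := insert s(b, c) (F.erase s(c, b'))
    have hbcF' : s(b, c) ∉ F.erase s(c, b') := fun h => hbcF (mem_of_mem_erase h)
    have hdeg : ∀ v, edgeDegree F' v + (if v ∈ s(c, b') then 1 else 0) =
        edgeDegree F v + (if v ∈ s(b, c) then 1 else 0) := edgeDegree_insert_erase_add hbcF' hcb'F
    have hle : ∀ v ≠ b, edgeDegree F' v ≤ edgeDegree F v := fun v hvb => by
      have hmem : v ∈ s(b, c) → v ∈ s(c, b') := by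
        simp only [Sym2.mem_iff]
        tauto
      have := hdeg v
      split_ifs at this with hy hx hx <;> first | omega | exact absurd (hmem hx) hy
    have hF' : ∀ v, edgeDegree F' v ≤ k v := fun v => by
      by_cases hvb : v = b
      · subst hvb
        have := hdeg v
        split_ifs at this <;> omega
      · exact (hle v hvb).trans (hF v)
    have hb'k : edgeDegree F' b' < k b' := by
      have hb'_mem : b' ∉ s(b, c) := by
        rw [Sym2.mem_iff]
        rintro (rfl | rfl) <;> simp_all
      have := hdeg b'
      have := hF b'
      simp only [Sym2.mem_mk_right, if_true, if_neg hb'_mem] at *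
      omega
    have hchainF' : List.IsChain (residualAdj B C E F') (b' :: rest) :=
      hchain'.residualAdj_insert_erase (Sym2.mem_mk_right b c) (Sym2.mem_mk_left c b') hc_tail
    obtain ⟨F'', hF''E, hF'', hcard⟩ := exists_card_succ_of_isChain_residualAdj hBC k rest F' b' z
      (insert_subset hbcE ((erase_subset _ _).trans hFE)) hF' hb' hb'k hchainF' hnodup'
      (by simpa using hz) hzC
      ((hle z fun h => Set.disjoint_left.mp hBC hb (h ▸ hzC)).trans_lt hzk)
    refine ⟨F'', hF''E, hF'', hcard.trans ?_⟩
    rw [card_insert_of_notMem hbcF', card_erase_add_one hcb'F]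

end Residual

section Konig

variable [DecidableEq V] {B C : Set V} {E F : Finset (Sym2 V)} {k : V → ℕ}

theorem not_reflTransGen_residualAdj_of_maximal (hBC : Disjoint B C) (hFE : F ⊆ E)
    (hF : ∀ v, edgeDegree F v ≤ k v)
    (hmax : ∀ F' ⊆ E, (∀ v, edgeDegree F' v ≤ k v) → #F' ≤ #F)
    {b z : V} (hb : b ∈ B) (hbk : edgeDegree F b < k b) (hz : z ∈ C) (hzk : edgeDegree F z < k z) :
    ¬Relation.ReflTransGen (residualAdj B C E F) b z := fun hbz => by
  obtain ⟨l, hchain, hnodup, hlast⟩ :=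
    List.exists_nodup_isChain_cons_of_relationReflTransGen hbz
  obtain ⟨F', hF'E, hF', hcard⟩ := exists_card_succ_of_isChain_residualAdj hBC k l F b z hFE hF
    hb hbk hchain hnodup hlast hz hzk
  have := hmax F' hF'E hF'
  omega

/-- The cover is read off the vertices `Z` reachable in the residual digraph from vertices of
`B` with spare capacity: it consists of `B \ Z` and `C ∩ Z`. -/
theorem exists_cover_of_forall_not_reflTransGen [Finite V] (hBC : Disjoint B C)
    (hE : ∀ e ∈ E, ∃ b ∈ B, ∃ c ∈ C, e = s(b, c)) (hFE : F ⊆ E)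
    (hnoaug : ∀ b ∈ B, edgeDegree F b < k b → ∀ z ∈ C, edgeDegree F z < k z →
      ¬Relation.ReflTransGen (residualAdj B C E F) b z) :
    ∃ W : Finset V, (W : Set V) ⊆ B ∪ C ∧
      ∑ w ∈ W, k w + #{e ∈ E | ∀ w ∈ W, w ∉ e} ≤ #F := by
  set Z : Set V := {v | ∃ b ∈ B, edgeDegree F b < k b ∧
    Relation.ReflTransGen (residualAdj B C E F) b v}
  set W : Finset V := (Set.toFinite {v | v ∈ B ∧ v ∉ Z ∨ v ∈ C ∧ v ∈ Z}).toFinset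
  have hmemW : ∀ v, v ∈ W ↔ v ∈ B ∧ v ∉ Z ∨ v ∈ C ∧ v ∈ Z := fun v => Set.Finite.mem_toFinset _
  have hB_of_notMem : ∀ v ∈ B, v ∉ W → v ∈ Z := fun v hv hvW => by
    by_contra hvZ
    exact hvW ((hmemW v).mpr (.inl ⟨hv, hvZ⟩))
  have hC_of_notMem : ∀ v ∈ C, v ∉ W → v ∉ Z := fun v hv hvW hvZ =>
    hvW ((hmemW v).mpr (.inr ⟨hv, hvZ⟩))
  have hsat : ∀ w ∈ W, k w ≤ edgeDegree F w := fun w hw => by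
    by_contra! hwk
    rcases (hmemW w).mp hw with ⟨hwB, hwZ⟩ | ⟨hwC, b, hb, hbk, hbw⟩
    · exact hwZ ⟨w, hwB, hwk, .refl⟩
    · exact hnoaug b hb hbk w hwC hwk hbw
  have huncovered : {e ∈ E | ∀ w ∈ W, w ∉ e} ⊆ {e ∈ F | ∀ w ∈ W, w ∉ e} := by
    simp only [subset_iff, mem_filter, and_imp]
    intro e heE hfree
    refine ⟨?_, hfree⟩
    obtain ⟨b, hb, c, hc, rfl⟩ := hE e heE
    obtain ⟨b₀, hb₀, hb₀k, hb₀b⟩ := hB_of_notMem b hb fun h => hfree b h (Sym2.mem_mk_left _ _)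
    by_contra hbcF
    exact hC_of_notMem c hc (fun h => hfree c h (Sym2.mem_mk_right _ _))
      ⟨b₀, hb₀, hb₀k, hb₀b.tail (.inl ⟨hb, hc, heE, hbcF⟩)⟩
  have hone : ∀ e ∈ F, ∀ u ∈ W, ∀ w ∈ W, u ∈ e → w ∈ e → u = w := by
    intro e heF
    obtain ⟨b, hb, c, hc, rfl⟩ := hE e (hFE heF)
    have hnot : ¬(b ∈ W ∧ c ∈ W) := fun ⟨hbW, hcW⟩ => by
      have hbZ : b ∉ Z := ((hmemW b).mp hbW).elim (·.2)
        fun h => (Set.disjoint_left.mp hBC hb h.1).elim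
      obtain ⟨b₀, hb₀, hb₀k, hb₀c⟩ : c ∈ Z := ((hmemW c).mp hcW).elim
        (fun h => (Set.disjoint_left.mp hBC h.1 hc).elim) (·.2)
      exact hbZ ⟨b₀, hb₀, hb₀k, hb₀c.tail (.inr ⟨hc, hb, Sym2.eq_swap ▸ heF⟩)⟩
    simp only [Sym2.mem_iff]
    rintro u hu w hw (rfl | rfl) (rfl | rfl) <;> tauto
  refine ⟨W, fun w hw => ((hmemW w).mp hw).imp (·.1) (·.1), ?_⟩
  calc ∑ w ∈ W, k w + #{e ∈ E | ∀ w ∈ W, w ∉ e}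
      ≤ ∑ w ∈ W, edgeDegree F w + #{e ∈ F | ∀ w ∈ W, w ∉ e} :=
        add_le_add (sum_le_sum hsat) (card_le_card huncovered)
    _ ≤ #F := sum_edgeDegree_add_card_filter_le hone

/-- The nontrivial half of the min-max theorem for simple `k`-matchings of a finite bipartite
graph with edge set `E`. -/
theorem exists_edgeDegree_le_and_cover [Finite V] (hBC : Disjoint B C)
    (hE : ∀ e ∈ E, ∃ b ∈ B, ∃ c ∈ C, e = s(b, c)) (k : V → ℕ) :
    ∃ F ⊆ E, (∀ v, edgeDegree F v ≤ k v) ∧ ∃ W : Finset V, (W : Set V) ⊆ B ∪ C ∧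
      ∑ w ∈ W, k w + #{e ∈ E | ∀ w ∈ W, w ∉ e} ≤ #F := by
  classical
  obtain ⟨F, hF, hmax⟩ := exists_max_image {F ∈ E.powerset | ∀ v, edgeDegree F v ≤ k v} card
    ⟨∅, mem_filter.mpr ⟨empty_mem_powerset E, fun v => by simp [edgeDegree]⟩⟩
  simp only [mem_filter, mem_powerset, and_imp] at hF hmax
  exact ⟨F, hF.1, hF.2, exists_cover_of_forall_not_reflTransGen hBC hE hF.1
    fun _ hb hbk _ hz hzk =>
      not_reflTransGen_residualAdj_of_maximal hBC hF.1 hF.2 hmax hb hbk hz hzk⟩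

end Konig

section Tripartite

variable {G : SimpleGraph V} {A B C : Set V}

theorem IsTripartition.exists_mem_of_isNClique_three (h : IsTripartition G A B C) {t : Finset V}
    (ht : G.IsNClique 3 t) : ∃ a ∈ A, ∃ b ∈ B, ∃ c ∈ C, a ∈ t ∧ b ∈ t ∧ c ∈ t := by
  classical
  obtain ⟨hcov, -, -, -, hA, hB, hC⟩ := h
  have hle : ∀ X : Set V, (∀ u ∈ X, ∀ v ∈ X, ¬G.Adj u v) → #{v ∈ t | v ∈ X} ≤ 1 :=
    fun X hX => card_le_one.mpr fun u hu v hv => by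
      rw [mem_filter] at hu hv
      by_contra huv
      exact hX u hu.2 v hv.2 (ht.isClique hu.1 hv.1 huv)
  have hcard : #t ≤ #{v ∈ t | v ∈ A} + #{v ∈ t | v ∈ B} + #{v ∈ t | v ∈ C} := by
    refine (card_le_card fun v hv => ?_).trans
      ((card_union_le _ _).trans (Nat.add_le_add_right (card_union_le _ _) _))
    have hv' : v ∈ A ∪ B ∪ C := hcov ▸ Set.mem_univ v
    simp only [mem_union, mem_filter, hv, true_and]
    simpa only [Set.mem_union] using hv'
  have := ht.card_eq
  have := hle A hA
  have := hle B hB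
  have := hle C hC
  obtain ⟨a, ha⟩ := card_pos.mp (show 0 < #{v ∈ t | v ∈ A} by omega)
  obtain ⟨b, hb⟩ := card_pos.mp (show 0 < #{v ∈ t | v ∈ B} by omega)
  obtain ⟨c, hc⟩ := card_pos.mp (show 0 < #{v ∈ t | v ∈ C} by omega)
  rw [mem_filter] at ha hb hc
  exact ⟨a, ha.2, b, hb.2, c, hc.2, ha.1, hb.1, hc.1⟩

/-- A vertex set `W ⊆ B ∪ C` yields the `𝒯`-transversal made of all edges between `A` and `W`
together with the edges of `G[B ∪ C]` avoiding `W`. -/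
theorem triTransversalNum_le_s10 [DecidableEq V] [Finite V] (hpart : IsTripartition G A B C)
    (hAB : CompleteSide G A B) (hAC : CompleteSide G A C) {E : Finset (Sym2 V)}
    (hE : (E : Set (Sym2 V)) = edgesBetween G B C) {W : Finset V} (hW : (W : Set V) ⊆ B ∪ C) :
    triTransversalNum G ≤ A.ncard * #W + #{e ∈ E | ∀ w ∈ W, w ∉ e} := by
  set T : Set (Sym2 V) :=
    (fun q : V × V => s(q.1, q.2)) '' (A ×ˢ W) ∪ ↑{e ∈ E | ∀ w ∈ W, w ∉ e}
  have hT : IsTriTransversal G T := by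
    refine ⟨?_, fun t ht => ?_⟩
    · rintro _ (⟨⟨a, w⟩, ⟨ha, hw⟩, rfl⟩ | he)
      · exact (hW hw).elim (hAB a ha w) (hAC a ha w)
      · exact (hE ▸ (mem_filter.mp he).1 : _ ∈ edgesBetween G B C).1
    obtain ⟨a, ha, b, hb, c, hc, hat, hbt, hct⟩ := hpart.exists_mem_of_isNClique_three ht
    by_cases hbW : b ∈ W
    · exact ⟨s(a, b), ⟨a, hat, b, hbt, (hAB a ha b hb).ne, rfl⟩, .inl ⟨(a, b), ⟨ha, hbW⟩, rfl⟩⟩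
    by_cases hcW : c ∈ W
    · exact ⟨s(a, c), ⟨a, hat, c, hct, (hAC a ha c hc).ne, rfl⟩, .inl ⟨(a, c), ⟨ha, hcW⟩, rfl⟩⟩
    have hbc : G.Adj b c :=
      ht.isClique hbt hct fun h => Set.disjoint_left.mp hpart.2.2.2.1 hb (h ▸ hc)
    refine ⟨s(b, c), ⟨b, hbt, c, hct, hbc.ne, rfl⟩, .inr (mem_filter.mpr ⟨?_, ?_⟩)⟩
    · exact (Finset.mem_coe.mp (hE ▸ ⟨hbc, b, hb, c, hc, rfl⟩ : s(b, c) ∈ (E : Set (Sym2 V))))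
    · intro w hw hwbc
      rcases Sym2.mem_iff.mp hwbc with rfl | rfl <;> contradiction
  calc triTransversalNum G ≤ T.ncard := Nat.sInf_le ⟨T, hT, rfl⟩
    _ ≤ ((fun q : V × V => s(q.1, q.2)) '' (A ×ˢ W)).ncard + #{e ∈ E | ∀ w ∈ W, w ∉ e} := by
      rw [← Set.ncard_coe_finset {e ∈ E | ∀ w ∈ W, w ∉ e}]
      exact Set.ncard_union_le _ _
    _ ≤ A.ncard * #W + #{e ∈ E | ∀ w ∈ W, w ∉ e} := by
      rw [← Set.ncard_coe_finset W, ← Set.ncard_prod]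
      exact Nat.add_le_add_right (Set.ncard_image_le (Set.toFinite (A ×ˢ (W : Set V)))) _

end Tripartite

/-- The bipartite graph `G[B ∪ C]` of a bilaterally-complete tripartite graph `G`
with complete sides `G[A∪B]`, `G[A∪C]` and `|A| = p` contains a subgraph `F` with
exactly `τ△(G)` edges whose maximum degree is at most `p`. -/
theorem exists_subgraph_tau_edges_maxdeg_le [Fintype V] (G : SimpleGraph V)
    (A B C : Set V) (hpart : IsTripartition G A B C)
    (hAB : CompleteSide G A B) (hAC : CompleteSide G A C)
    (p : ℕ) (hp : A.ncard = p) :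
    ∃ F ⊆ edgesBetween G B C, F.ncard = triTransversalNum G ∧
      ∀ v : V, {e ∈ F | v ∈ e}.ncard ≤ p := by
  classical
  have hBC : Disjoint B C := hpart.2.2.2.1
  obtain ⟨E, hE⟩ : ∃ E : Finset (Sym2 V), (E : Set (Sym2 V)) = edgesBetween G B C :=
    ⟨_, (Set.toFinite _).coe_toFinset⟩
  have hEBC : ∀ e ∈ E, ∃ b ∈ B, ∃ c ∈ C, e = s(b, c) := fun e he =>
    (hE ▸ Finset.mem_coe.mpr he : e ∈ edgesBetween G B C).2
  obtain ⟨F, hFE, hFp, W, hW, hcover⟩ :=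
    exists_edgeDegree_le_and_cover hBC hEBC fun _ => p
  have hτ : triTransversalNum G ≤ #F := by
    have := triTransversalNum_le_s10 hpart hAB hAC hE hW
    rw [sum_const, smul_eq_mul] at hcover
    rw [hp] at this
    linarith [mul_comm p #W]
  obtain ⟨F₀, hF₀F, hF₀card⟩ := exists_subset_card_eq hτ
  refine ⟨F₀, fun e he => hE ▸ hFE (hF₀F he), by rw [Set.ncard_coe_finset, hF₀card], fun v => ?_⟩
  rw [ncard_coe_filter_mem]
  exact (edgeDegree_mono hF₀F v).trans (hFp v)
end
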